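/- arXiv:2212.04748 — 9 statements merged into one kernel-verified Lean document; each statement's English description precedes it below -/
import Mathlib

section
/- Let (N,v) be a minimal incomplete game with n ≥ 4 players and total excess Δ ≥ 0. Then the weak Shapley value over 1-convex extensions is unbounded below: for every b ∈ ℝ and every player i ∈ N there exists a 1-convex extension w of (N,v) with φ_i(w) < b. -/
open Finset

/-- The Shapley value `φ_i(w) = (1/n) ∑_{S ⊆ N∖{i}} C(n-1,|S|)⁻¹ (w(S∪{i}) - w(S))`. -/
noncomputable def shapley (n : ℕ) (w : Finset (Fin n) → ℝ) (i : Fin n) : ℝ :=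
  (1 / (n : ℝ)) * ∑ S ∈ (Finset.univ.erase i).powerset,
    ((Nat.choose (n - 1) S.card : ℝ))⁻¹ * (w (insert i S) - w S)

/-- A game is convex if `w(S) + w(T) ≤ w(S ∪ T) + w(S ∩ T)` for all coalitions. -/
def IsConvexGame {n : ℕ} (w : Finset (Fin n) → ℝ) : Prop :=
  ∀ S T : Finset (Fin n), w S + w T ≤ w (S ∪ T) + w (S ∩ T)

/-- The upper vector `b^w_i = w(N) - w(N∖{i})`. -/
noncomputable def upperVec {n : ℕ} (w : Finset (Fin n) → ℝ) (i : Fin n) : ℝ :=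
  w Finset.univ - w (Finset.univ.erase i)

/-- The gap function `g^w(S) = ∑_{i∈S} b^w_i - w(S)`. -/
noncomputable def gap {n : ℕ} (w : Finset (Fin n) → ℝ) (S : Finset (Fin n)) : ℝ :=
  (∑ i ∈ S, upperVec w i) - w S

/-- A game is 1-convex if `∑ b^w_i ≥ w(N)` and
`w(S) ≤ w(N) - ∑_{i ∈ N∖S} b^w_i` for every nonempty `S`. -/
def IsOneConvex {n : ℕ} (w : Finset (Fin n) → ℝ) : Prop :=
  w Finset.univ ≤ (∑ i, upperVec w i) ∧
  ∀ S : Finset (Fin n), S.Nonempty →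
    w S ≤ w Finset.univ - ∑ i ∈ Finset.univ \ S, upperVec w i

/-- `w` is an extension of the minimal incomplete game given by singleton values `v`
and grand-coalition value `vN`. -/
def IsExtension {n : ℕ} (v : Fin n → ℝ) (vN : ℝ) (w : Finset (Fin n) → ℝ) : Prop :=
  w ∅ = 0 ∧ (∀ i, w {i} = v i) ∧ w Finset.univ = vN

/-- Harsanyi dividend `d_w(T) = ∑_{S ⊆ T} (-1)^{|T|-|S|} w(S)`. -/
noncomputable def dividend {n : ℕ} (w : Finset (Fin n) → ℝ) (T : Finset (Fin n)) : ℝ :=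
  ∑ S ∈ T.powerset, (-1 : ℝ) ^ (T.card - S.card) * w S

/-- A game is positive if all Harsanyi dividends of nonempty coalitions are nonnegative. -/
def IsPositive {n : ℕ} (w : Finset (Fin n) → ℝ) : Prop :=
  ∀ T : Finset (Fin n), T.Nonempty → 0 ≤ dividend w T

/-- The extreme game `v^k`. -/
noncomputable def vgame (n : ℕ) (v : Fin n → ℝ) (Δ : ℝ) (k : Fin n)
    (S : Finset (Fin n)) : ℝ :=
  if 2 ≤ S.card ∧ k ∈ S then (∑ j ∈ S, v j) + Δ else ∑ j ∈ S, v j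

/-- The extreme game `v_T` (for `T` with `|T| ≥ 2`). -/
noncomputable def vTgame (n : ℕ) (v : Fin n → ℝ) (Δ : ℝ) (T : Finset (Fin n))
    (S : Finset (Fin n)) : ℝ :=
  if T ⊆ S then (∑ j ∈ S, v j) + Δ else ∑ j ∈ S, v j

/-- The extreme-ray game `e_T`. -/
def eTgame (n : ℕ) (T S : Finset (Fin n)) : ℝ := if S = T then -1 else 0

/-- The index set `E = {T ⊆ N : 2 ≤ |T| ≤ n-2}`. -/
def raysIndex (n : ℕ) : Finset (Finset (Fin n)) :=
  Finset.univ.filter (fun T => 2 ≤ T.card ∧ T.card ≤ n - 2)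

/-- The index set `N₁ = {T ⊆ N : |T| ≥ 2}`. -/
def coalN1 (n : ℕ) : Finset (Finset (Fin n)) :=
  Finset.univ.filter (fun T => 2 ≤ T.card)

/-- The convex combination `w_α = ∑_k α_k v^k`. -/
noncomputable def walpha (n : ℕ) (v : Fin n → ℝ) (Δ : ℝ) (α : Fin n → ℝ)
    (S : Finset (Fin n)) : ℝ :=
  ∑ k, α k * vgame n v Δ k S

/-- The game `w_{α,β} = ∑_k α_k v^k + ∑_{T∈E} β_T e_T`. -/
noncomputable def walphabeta (n : ℕ) (v : Fin n → ℝ) (Δ : ℝ) (α : Fin n → ℝ)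
    (β : Finset (Fin n) → ℝ) (S : Finset (Fin n)) : ℝ :=
  (∑ k, α k * vgame n v Δ k S) + ∑ T ∈ raysIndex n, β T * eTgame n T S

/-- The game `w_A = ∑_{T∈N₁} α_T v_T`. -/
noncomputable def wAgame (n : ℕ) (v : Fin n → ℝ) (Δ : ℝ) (A : Finset (Fin n) → ℝ)
    (S : Finset (Fin n)) : ℝ :=
  ∑ T ∈ coalN1 n, A T * vTgame n v Δ T S

/-- The imputation set `I(v)`. -/
def imputations (n : ℕ) (v : Fin n → ℝ) (vN : ℝ) : Set (Fin n → ℝ) :=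
  {x | (∑ i, x i) = vN ∧ ∀ i, v i ≤ x i}

/-- The imputation `I^k`. -/
noncomputable def Ik (n : ℕ) (v : Fin n → ℝ) (Δ : ℝ) (k : Fin n) : Fin n → ℝ :=
  fun i => if i = k then v i + Δ else v i

/-- The imputation `I^α`. -/
noncomputable def Ialpha (n : ℕ) (v : Fin n → ℝ) (Δ : ℝ) (α : Fin n → ℝ) : Fin n → ℝ :=
  fun i => v i + α i * Δ

/-- The core of a game. -/
def core {n : ℕ} (w : Finset (Fin n) → ℝ) : Set (Fin n → ℝ) :=
  {x | (∑ i, x i) = w Finset.univ ∧ ∀ S : Finset (Fin n), w S ≤ ∑ i ∈ S, x i}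

/-- The marginal vector `m_σ^w`. -/
noncomputable def margVec {n : ℕ} (w : Finset (Fin n) → ℝ) (σ : Equiv.Perm (Fin n))
    (i : Fin n) : ℝ :=
  w (insert i (Finset.univ.filter (fun j => σ j < σ i))) -
    w (Finset.univ.filter (fun j => σ j < σ i))

/-- The Weber set: the convex hull of all marginal vectors. -/
noncomputable def weber {n : ℕ} (w : Finset (Fin n) → ℝ) : Set (Fin n → ℝ) :=
  convexHull ℝ {m | ∃ σ : Equiv.Perm (Fin n), m = margVec w σ}

/-- The maximal surplus `s_{ij}(x,w) = max {w(S) - x(S) : i ∈ S, j ∉ S}`. -/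
noncomputable def surplus {n : ℕ} (w : Finset (Fin n) → ℝ) (x : Fin n → ℝ)
    (i j : Fin n) : ℝ :=
  sSup {r : ℝ | ∃ S : Finset (Fin n), i ∈ S ∧ j ∉ S ∧ r = w S - ∑ m ∈ S, x m}

/-- The prekernel of a game. -/
def prekernel {n : ℕ} (w : Finset (Fin n) → ℝ) : Set (Fin n → ℝ) :=
  {x | (∑ i, x i) = w Finset.univ ∧
    ∀ i j : Fin n, i ≠ j → surplus w x i j = surplus w x j i}

private lemma shapley_add' (n : ℕ) (f g : Finset (Fin n) → ℝ) (β : ℝ) (i : Fin n) :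
    shapley n (fun S => f S + β * g S) i = shapley n f i + β * shapley n g i := by
  simp only [shapley, Finset.mul_sum, ← Finset.sum_add_distrib]
  refine Finset.sum_congr rfl fun S _ => by ring

/-- the weak Shapley value over 1-convex extensions is unbounded below. -/
theorem stmt4 (n : ℕ) (hn : 4 ≤ n) (v : Fin n → ℝ) (vN : ℝ) (Δ : ℝ)
    (hΔdef : Δ = vN - ∑ i, v i) (hΔ : 0 ≤ Δ) :
    ∀ b : ℝ, ∀ i : Fin n, ∃ w : Finset (Fin n) → ℝ,
      IsExtension v vN w ∧ IsOneConvex w ∧ shapley n w i < b := by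
  intro b i
  haveI : Nontrivial (Fin n) := Fin.nontrivial_iff_two_le.mpr (by omega)
  obtain ⟨j, hj⟩ := exists_ne i
  have hinotj : i ∉ ({j} : Finset (Fin n)) := by simp [Ne.symm hj]
  set T : Finset (Fin n) := insert i {j} with hT
  have hiT : i ∈ T := Finset.mem_insert_self i {j}
  have hTcard : T.card = 2 := by
    rw [hT, Finset.card_insert_of_notMem hinotj, Finset.card_singleton]
  have hnR : (4:ℝ) ≤ (n:ℝ) := by exact_mod_cast hn
  set A := shapley n (vgame n v Δ i) i with hA
  set M : ℝ := (n:ℝ) * ((n:ℝ) - 1) with hM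
  have hMpos : 0 < M := by nlinarith
  set β := max 0 ((A - b) * M + 1) with hβ
  have hβ0 : 0 ≤ β := le_max_left _ _
  have hβ1 : (A - b) * M + 1 ≤ β := le_max_right _ _
  set w : Finset (Fin n) → ℝ := fun S => vgame n v Δ i S + β * eTgame n T S with hw
  have hwS : ∀ S : Finset (Fin n), w S =
      (∑ m ∈ S, v m) + (if 2 ≤ S.card ∧ i ∈ S then Δ else 0)
        + β * (if S = T then -1 else 0) := by
    intro S
    simp only [hw, vgame, eTgame]
    split_ifs <;> ring
  have hcu : (Finset.univ : Finset (Fin n)).card = n := by simp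
  have hvN : vN = (∑ m, v m) + Δ := by rw [hΔdef]; ring
  have hwuniv : w Finset.univ = vN := by
    rw [hwS]
    have h1 : 2 ≤ (Finset.univ : Finset (Fin n)).card ∧ i ∈ (Finset.univ : Finset (Fin n)) :=
      ⟨by rw [hcu]; omega, Finset.mem_univ i⟩
    have h2 : (Finset.univ : Finset (Fin n)) ≠ T := by
      intro h; rw [h, hTcard] at hcu; omega
    rw [if_pos h1, if_neg h2, hvN]; ring
  have hemptyT : (∅ : Finset (Fin n)) ≠ T := by
    intro h; rw [← h] at hTcard; simp at hTcard
  have hwempty : w ∅ = 0 := by rw [hwS]; simp [hemptyT]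
  have hwsing : ∀ m, w {m} = v m := by
    intro m
    have h1 : ({m} : Finset (Fin n)) ≠ T := by
      intro h; rw [← h] at hTcard; simp at hTcard
    rw [hwS]; simp [h1]
  have hbu : ∀ m, upperVec w m = v m + (if m = i then Δ else 0) := by
    intro m
    have hce : (Finset.univ.erase m).card = n - 1 := by
      rw [Finset.card_erase_of_mem (Finset.mem_univ m), hcu]
    have hne : Finset.univ.erase m ≠ T := by
      intro h; rw [h, hTcard] at hce; omega
    have hsum : ∑ x ∈ Finset.univ.erase m, v x = (∑ x, v x) - v m :=
      Finset.sum_erase_eq_sub (Finset.mem_univ m)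
    unfold upperVec
    rw [hwuniv, hwS, hvN, if_neg hne, hsum]
    by_cases him : m = i
    · subst him
      have h3 : ¬(2 ≤ (Finset.univ.erase m).card ∧ m ∈ Finset.univ.erase m) := by simp
      rw [if_pos rfl, if_neg h3]; ring
    · have h3 : 2 ≤ (Finset.univ.erase m).card ∧ i ∈ Finset.univ.erase m :=
        ⟨by rw [hce]; omega, Finset.mem_erase.mpr ⟨Ne.symm him, Finset.mem_univ i⟩⟩
      rw [if_neg him, if_pos h3]; ring
  have hsumb : ∑ m, upperVec w m = (∑ m, v m) + Δ := by
    simp only [hbu]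
    rw [Finset.sum_add_distrib, Finset.sum_ite_eq' Finset.univ i (fun _ => Δ)]
    simp
  have honeconv : IsOneConvex w := by
    constructor
    · rw [hwuniv, hsumb, hvN]
    · intro S hS
      have hSsub : S ⊆ Finset.univ := Finset.subset_univ S
      have hsd : ∑ m ∈ Finset.univ \ S, upperVec w m
          = ((∑ m, v m) - ∑ m ∈ S, v m) + (if i ∈ S then 0 else Δ) := by
        simp only [hbu]
        rw [Finset.sum_add_distrib, Finset.sum_sdiff_eq_sub hSsub]
        congr 1
        rw [Finset.sum_ite_eq' (Finset.univ \ S) i (fun _ => Δ)]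
        by_cases hi : i ∈ S <;> simp [Finset.mem_sdiff, hi]
      rw [hwS, hwuniv, hvN, hsd]
      have h1 : (if 2 ≤ S.card ∧ i ∈ S then Δ else 0) ≤ (if i ∈ S then Δ else 0) := by
        split_ifs with h h'
        · exact le_rfl
        · exact absurd h.2 h'
        · exact hΔ
        · exact le_rfl
      have h2 : β * (if S = T then -1 else 0) ≤ 0 := by
        split_ifs
        · nlinarith
        · simp
      have hiff : (if i ∈ S then Δ else 0) + (if i ∈ S then 0 else Δ) = Δ := by
        split_ifs <;> ring
      linarith
  have hSe : shapley n (eTgame n T) i = (1/(n:ℝ)) * (((n:ℝ) - 1)⁻¹ * (-1)) := by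
    unfold shapley
    congr 1
    rw [Finset.sum_eq_single ({j} : Finset (Fin n))]
    · have h1 : insert i ({j} : Finset (Fin n)) = T := hT.symm
      have h2 : ({j} : Finset (Fin n)) ≠ T := by
        intro h; rw [← h] at hTcard; simp at hTcard
      rw [Finset.card_singleton, Nat.choose_one_right]
      simp only [eTgame, h1, if_pos rfl, if_neg h2]
      rw [Nat.cast_sub (by omega : 1 ≤ n)]
      norm_num
    · intro S hS hne
      have hiS : i ∉ S := by
        have hsub := Finset.mem_powerset.mp hS
        intro hi; exact (Finset.mem_erase.mp (hsub hi)).1 rfl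
      have h1 : insert i S ≠ T := by
        intro h
        apply hne
        have h2 : S = T.erase i := by rw [← h, Finset.erase_insert hiS]
        rw [h2, hT, Finset.erase_insert hinotj]
      have h2 : S ≠ T := fun h => hiS (h ▸ hiT)
      simp [eTgame, h1, h2]
    · intro h
      exact absurd (Finset.mem_powerset.mpr (Finset.singleton_subset_iff.mpr
        (Finset.mem_erase.mpr ⟨hj, Finset.mem_univ j⟩))) h
  have hlin : shapley n w i = A + β * shapley n (eTgame n T) i := by
    rw [hw, hA]
    exact shapley_add' n (vgame n v Δ i) (eTgame n T) β i
  refine ⟨w, ⟨hwempty, hwsing, hwuniv⟩, honeconv, ?_⟩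
  rw [hlin, hSe]
  have hMinv : 0 < M⁻¹ := inv_pos.mpr hMpos
  have key : (1/(n:ℝ)) * (((n:ℝ) - 1)⁻¹ * (-1)) = -M⁻¹ := by
    rw [hM, mul_inv]; ring
  rw [key]
  have h3 : ((A - b) * M + 1) * M⁻¹ ≤ β * M⁻¹ :=
    mul_le_mul_of_nonneg_right hβ1 hMinv.le
  have h4 : ((A - b) * M + 1) * M⁻¹ = (A - b) + M⁻¹ := by
    field_simp
  have h5 : β * -M⁻¹ = -(β * M⁻¹) := by ring
  rw [h5]
  linarith
end

section
/- Let (N,v) be a minimal incomplete game with total excess Δ and n ≥ 2 players, and let A = (α_T)_{T∈N₁} satisfy α_T ≥ 0 and Σ_{T∈N₁} α_T = 1. Then for every player i the Shapley value of the game w_A satisfies φ_i(w_A) = v({i}) + Δ Σ_{T∈N₁, i∈T} α_T / |T|. -/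
/-!
The Shapley value is linear, and `v_T` is the additive game `S ↦ ∑_{j ∈ S} v j` plus `Δ` times the
unanimity game `u_T = [T ⊆ ·]`; the additive game is itself `∑_j v j • u_{j}`. So everything
reduces to `φ_i(u_T) = [i ∈ T] / |T|`. For `i ∈ T` the marginal contribution of `i` to `S ∌ i` is
`[T ∖ {i} ⊆ S]`, and `∑_{T∖{i} ⊆ S ⊆ N∖{i}} C(n-1, |S|)⁻¹ = n / |T|`: grouping by `|S|`, the identity
`C(m, a+j) C(a+j, a) = C(m, a) C(m-a, j)` turns this into the hockey-stick identity.
-/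

open Finset

lemma sum_range_choose_div_choose_add (a b : ℕ) :
    ∑ j ∈ range (b + 1), (b.choose j : ℝ) / (a + b).choose (a + j) = (a + b + 1) / (a + 1) := by
  have hpos : ((a + b).choose a : ℝ) ≠ 0 := by exact_mod_cast (Nat.choose_pos (by omega)).ne'
  have hterm : ∀ j ∈ range (b + 1),
      (b.choose j : ℝ) / (a + b).choose (a + j) = ((j + a).choose a : ℝ) / (a + b).choose a := by
    intro j hj
    have hj : j ≤ b := Nat.lt_succ_iff.mp (mem_range.mp hj)
    have hmul : (a + b).choose (a + j) * (a + j).choose a = (a + b).choose a * b.choose j := by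
      simpa using Nat.choose_mul (n := a + b) (Nat.le_add_right a j)
    rw [div_eq_div_iff (by exact_mod_cast (Nat.choose_pos (by omega)).ne') hpos, add_comm j a]
    norm_cast
    linarith [hmul]
  have habsorb : (a + b + 1 : ℝ) * (a + b).choose a = (a + b + 1).choose (a + 1) * (a + 1) := by
    exact_mod_cast Nat.add_one_mul_choose_eq (a + b) a
  calc ∑ j ∈ range (b + 1), (b.choose j : ℝ) / (a + b).choose (a + j)
      = (∑ j ∈ range (b + 1), ((j + a).choose a : ℝ)) / (a + b).choose a := by
        rw [sum_congr rfl hterm, sum_div]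
    _ = (a + b + 1).choose (a + 1) / (a + b).choose a := by
        rw [← Nat.cast_sum, Nat.sum_range_add_choose, add_comm b a]
    _ = (a + b + 1) / (a + 1) := by
        rw [div_eq_div_iff hpos (by positivity)]
        linarith

lemma sum_Icc_inv_choose_card {α : Type*} [DecidableEq α] {t s : Finset α} (h : t ⊆ s) :
    ∑ u ∈ Icc t s, ((#s).choose #u : ℝ)⁻¹ = (#s + 1) / (#t + 1) := by
  have hdisj : ∀ r ∈ (s \ t).powerset, Disjoint t r := fun r hr =>
    disjoint_of_subset_right (mem_powerset.mp hr) disjoint_sdiff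
  have hs : #s = #t + #(s \ t) := by rw [← card_sdiff_add_card_eq_card h, add_comm]
  rw [Icc_eq_image_powerset h, sum_image fun x hx y hy hxy => by
    rw [← union_sdiff_cancel_left (hdisj x hx), hxy, union_sdiff_cancel_left (hdisj y hy)]]
  rw [sum_congr rfl fun r hr => by rw [card_union_of_disjoint (hdisj r hr)],
    sum_powerset_apply_card fun k => ((#s).choose (#t + k) : ℝ)⁻¹]
  simp only [nsmul_eq_mul, ← div_eq_mul_inv]
  rw [hs, sum_range_choose_div_choose_add]
  push_cast
  ring

noncomputable def shapleyₗ (n : ℕ) (i : Fin n) : (Finset (Fin n) → ℝ) →ₗ[ℝ] ℝ where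
  toFun w := shapley n w i
  map_add' w w' := by
    simp only [shapley, Pi.add_apply, add_sub_add_comm, mul_add, sum_add_distrib]
  map_smul' c w := by
    simp only [shapley, Pi.smul_apply, smul_eq_mul, RingHom.id_apply, ← mul_sub, mul_sum]
    exact sum_congr rfl fun S _ => by ring

lemma shapley_eq_shapleyₗ (n : ℕ) (w : Finset (Fin n) → ℝ) (i : Fin n) :
    shapley n w i = shapleyₗ n i w := rfl

def unanimityGame {n : ℕ} (T S : Finset (Fin n)) : ℝ := if T ⊆ S then 1 else 0

lemma shapley_unanimityGame {n : ℕ} (T : Finset (Fin n)) (i : Fin n) :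
    shapley n (unanimityGame T) i = if i ∈ T then (#T : ℝ)⁻¹ else 0 := by
  split_ifs with hiT
  · have hi : ∀ S ∈ (univ.erase i).powerset, i ∉ S := fun S hS hiS =>
      (mem_erase.mp (mem_powerset.mp hS hiS)).1 rfl
    have hmarg : ∀ S ∈ (univ.erase i).powerset,
        unanimityGame T (insert i S) - unanimityGame T S = if T.erase i ⊆ S then 1 else 0 := by
      intro S hS
      have hTS : ¬ T ⊆ S := fun h => hi S hS (h hiT)
      simp only [unanimityGame, subset_insert_iff, if_neg hTS, sub_zero]
    have hcard : n - 1 = #(univ.erase i) := by simp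
    rw [shapley, sum_congr rfl fun S hS => by rw [hmarg S hS], hcard]
    simp only [mul_ite, mul_one, mul_zero]
    rw [← sum_filter, ← Icc_eq_filter_powerset,
      sum_Icc_inv_choose_card (erase_subset_erase i (subset_univ T))]
    rw [← Nat.cast_add_one, ← Nat.cast_add_one, card_erase_add_one (mem_univ i),
      card_erase_add_one hiT, card_univ, Fintype.card_fin]
    have hn : (n : ℝ) ≠ 0 := Nat.cast_ne_zero.mpr (Fin.pos i).ne'
    field_simp
  · have hmarg : ∀ S ∈ (univ.erase i).powerset,
        unanimityGame T (insert i S) - unanimityGame T S = 0 := by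
      intro S _
      simp only [unanimityGame, subset_insert_iff_of_notMem hiT, sub_self]
    rw [shapley, sum_congr rfl fun S hS => by rw [hmarg S hS]]
    simp

lemma vTgame_eq_sum_smul_unanimityGame (n : ℕ) (v : Fin n → ℝ) (Δ : ℝ) (T : Finset (Fin n)) :
    vTgame n v Δ T = ∑ j, v j • unanimityGame {j} + Δ • unanimityGame T := by
  funext S
  simp only [vTgame, unanimityGame, Pi.add_apply, Finset.sum_apply, Pi.smul_apply, smul_eq_mul,
    singleton_subset_iff, mul_ite, mul_one, mul_zero, sum_ite_mem, univ_inter]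
  split_ifs <;> ring

lemma shapley_vTgame (n : ℕ) (v : Fin n → ℝ) (Δ : ℝ) (T : Finset (Fin n)) (i : Fin n) :
    shapley n (vTgame n v Δ T) i = v i + if i ∈ T then Δ / #T else 0 := by
  rw [shapley_eq_shapleyₗ, vTgame_eq_sum_smul_unanimityGame, map_add, map_sum]
  simp only [map_smul, ← shapley_eq_shapleyₗ, shapley_unanimityGame]
  simp [div_eq_mul_inv]

lemma wAgame_eq_sum_smul_vTgame (n : ℕ) (v : Fin n → ℝ) (Δ : ℝ) (A : Finset (Fin n) → ℝ) :
    wAgame n v Δ A = ∑ T ∈ coalN1 n, A T • vTgame n v Δ T := by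
  funext S
  simp only [wAgame, Finset.sum_apply, Pi.smul_apply, smul_eq_mul]

theorem stmt6_general (n : ℕ) (v : Fin n → ℝ) (Δ : ℝ)
    (A : Finset (Fin n) → ℝ)
    (hA1 : ∑ T ∈ coalN1 n, A T = 1) (i : Fin n) :
    shapley n (wAgame n v Δ A) i =
      v i + Δ * ∑ T ∈ (coalN1 n).filter (fun T => i ∈ T), A T / (T.card : ℝ) := by
  rw [shapley_eq_shapleyₗ, wAgame_eq_sum_smul_vTgame, map_sum]
  simp only [map_smul, ← shapley_eq_shapleyₗ, shapley_vTgame, smul_eq_mul, mul_add,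
    sum_add_distrib, ← sum_mul, hA1, one_mul, mul_ite, mul_zero, ← sum_filter, mul_sum]
  congr 1
  exact sum_congr rfl fun T _ => by ring

/-- Shapley value of the game `w_A`:
`φ_i(w_A) = v({i}) + Δ ∑_{T∈N₁, i∈T} α_T / |T|`. -/
theorem stmt6 (n : ℕ) (hn : 2 ≤ n) (v : Fin n → ℝ) (vN : ℝ) (Δ : ℝ)
    (hΔdef : Δ = vN - ∑ i, v i)
    (A : Finset (Fin n) → ℝ) (hA0 : ∀ T ∈ coalN1 n, 0 ≤ A T)
    (hA1 : ∑ T ∈ coalN1 n, A T = 1) (i : Fin n) :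
    shapley n (wAgame n v Δ A) i =
      v i + Δ * ∑ T ∈ (coalN1 n).filter (fun T => i ∈ T), A T / (T.card : ℝ) :=
  stmt6_general n v Δ A hA1 i
end

section
/- Let (N,v) be a minimal incomplete game with n ≥ 2 players, v({i}) ≥ 0 for all i ∈ N, and total excess Δ > 0. Then the weak Shapley value over positive extensions is a proper subset of the imputation set I(v): the Shapley value of every positive extension lies in I(v), and for every k ∈ N there is no positive extension w of (N,v) with φ(w) = I^k. -/
open Finset

/-!
Expanding a game in unanimity games, the Shapley value becomes
`φ_i(w) = ∑_{T ∋ i} d_w(T) / |T| = w({i}) + ∑_{T ∋ i, |T| ≥ 2} d_w(T) / |T|`,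
and `∑_{T ⊆ N} d_w(T) = w(N)` gives efficiency. For a positive extension every term of the
last sum is nonnegative, so `φ_i(w) ≥ v({i})`. If `φ(w) = I^k`, then every `T` with `|T| ≥ 2`
contains some `i ≠ k` with `φ_i(w) = v({i})`, which forces `d_w(T) = 0`; but then also
`φ_k(w) = v({k}) < v({k}) + Δ`.
-/

theorem sum_Icc_finset_eq_sum_powerset_sdiff {α β : Type*} [DecidableEq α] [AddCommMonoid β]
    {A B : Finset α} (h : A ⊆ B) (f : Finset α → β) :
    ∑ S ∈ Icc A B, f S = ∑ R ∈ (B \ A).powerset, f (A ∪ R) := by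
  rw [Icc_eq_image_powerset h, sum_image]
  intro R₁ h₁ R₂ h₂ hR
  rw [mem_coe, mem_powerset] at h₁ h₂
  simp only at hR
  rw [← union_sdiff_cancel_left (disjoint_sdiff.mono_right h₁), hR,
    union_sdiff_cancel_left (disjoint_sdiff.mono_right h₂)]

theorem sum_Icc_neg_one_pow_card_sub {α : Type*} [DecidableEq α] {U S : Finset α} (h : U ⊆ S) :
    ∑ T ∈ Icc U S, (-1 : ℝ) ^ (#T - #U) = if U = S then 1 else 0 := by
  rw [sum_Icc_finset_eq_sum_powerset_sdiff h]
  have hcard : ∀ R ∈ (S \ U).powerset, (-1 : ℝ) ^ (#(U ∪ R) - #U) = (-1) ^ #R := by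
    intro R hR
    rw [card_union_of_disjoint (disjoint_sdiff.mono_right (mem_powerset.1 hR)),
      Nat.add_sub_cancel_left]
  rw [sum_congr rfl hcard]
  have halt := congrArg (Int.cast : ℤ → ℝ) (sum_powerset_neg_one_pow_card (x := S \ U))
  push_cast at halt
  rw [halt]
  exact if_congr ⟨fun e => h.antisymm (sdiff_eq_empty_iff_subset.1 e), fun e => by simp [e]⟩
    rfl rfl

theorem sum_choose_div_choose_add (s m : ℕ) :
    ∑ j ∈ range (m + 1), (m.choose j : ℝ) / (s + m).choose (s + j) = (s + m + 1) / (s + 1) := by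
  have hpos : ∀ j ≤ m, ((s + m).choose (s + j) : ℝ) ≠ 0 := fun j hj =>
    Nat.cast_ne_zero.2 (Nat.choose_pos (by omega)).ne'
  have hsm : ((s + m).choose s : ℝ) ≠ 0 := hpos 0 (Nat.zero_le m)
  -- `C(s+m, s+j) C(s+j, s) = C(s+m, s) C(m, j)` turns the sum into a hockey-stick sum
  have hterm : ∀ j ∈ range (m + 1),
      (m.choose j : ℝ) / (s + m).choose (s + j) = ((j + s).choose s : ℝ) / (s + m).choose s := by
    intro j hj
    have hj : j ≤ m := Nat.lt_succ_iff.1 (mem_range.1 hj)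
    have h := Nat.choose_mul (n := s + m) (k := s + j) (Nat.le_add_right s j)
    rw [Nat.add_sub_cancel_left, Nat.add_sub_cancel_left, add_comm s j] at h
    rw [div_eq_div_iff (hpos j hj) hsm, add_comm s j]
    exact_mod_cast (mul_comm _ _).trans (h.symm.trans (mul_comm _ _))
  rw [sum_congr rfl hterm, ← sum_div, ← Nat.cast_sum, Nat.sum_range_add_choose,
    div_eq_div_iff hsm (by positivity), add_comm m s]
  exact_mod_cast (Nat.add_one_mul_choose_eq (s + m) s).symm

theorem sum_powerset_dividend {n : ℕ} (w : Finset (Fin n) → ℝ) (S : Finset (Fin n)) :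
    ∑ T ∈ S.powerset, dividend w T = w S := by
  simp only [dividend]
  rw [sum_comm' (t' := S.powerset) (s' := fun U => Icc U S) (by
    intro T U
    simp only [mem_powerset, mem_Icc]
    exact ⟨fun h => ⟨⟨h.2, h.1⟩, h.2.trans h.1⟩, fun h => ⟨h.1.2, h.1.1⟩⟩)]
  simp_rw [← sum_mul]
  rw [sum_congr rfl fun U hU => by rw [sum_Icc_neg_one_pow_card_sub (mem_powerset.1 hU)]]
  simp

theorem dividend_singleton {n : ℕ} (w : Finset (Fin n) → ℝ) (i : Fin n) :
    dividend w {i} = w {i} - w ∅ := by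
  have h := sum_powerset_insert (notMem_empty i) fun S => (-1 : ℝ) ^ (#{i} - #S) * w S
  simp only [insert_empty_eq, powerset_empty, sum_singleton] at h
  rw [dividend, h]
  simp only [card_singleton, card_empty, tsub_zero, pow_one, neg_mul, one_mul, tsub_self,
    pow_zero]
  ring

theorem eq_sum_dividend_smul_unanimityGame {n : ℕ} (w : Finset (Fin n) → ℝ) :
    w = ∑ T, dividend w T • unanimityGame T := by
  funext S
  simp only [Finset.sum_apply, Pi.smul_apply, smul_eq_mul, unanimityGame, mul_ite, mul_one,
    mul_zero, ← sum_filter]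
  rw [← sum_powerset_dividend w S]
  exact sum_congr (by ext; simp) fun _ _ => rfl

theorem unanimityGame_insert_sub {n : ℕ} {T S : Finset (Fin n)} {i : Fin n} (hi : i ∈ T)
    (hiS : i ∉ S) :
    unanimityGame T (insert i S) - unanimityGame T S = if T.erase i ⊆ S then 1 else 0 := by
  simp only [unanimityGame, subset_insert_iff, if_neg (fun h : T ⊆ S => hiS (h hi)), sub_zero]

theorem unanimityGame_insert_of_notMem {n : ℕ} {T : Finset (Fin n)} {i : Fin n} (hi : i ∉ T)
    (S : Finset (Fin n)) : unanimityGame T (insert i S) = unanimityGame T S := by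
  simp only [unanimityGame, subset_insert_iff_of_notMem hi]

theorem shapley_sum {n : ℕ} {ι : Type*} (A : Finset ι) (g : ι → Finset (Fin n) → ℝ)
    (i : Fin n) : shapley n (∑ x ∈ A, g x) i = ∑ x ∈ A, shapley n (g x) i := by
  simp only [shapley, Finset.sum_apply, ← sum_sub_distrib, mul_sum]
  exact sum_comm

theorem shapley_smul {n : ℕ} (c : ℝ) (w : Finset (Fin n) → ℝ) (i : Fin n) :
    shapley n (c • w) i = c * shapley n w i := by
  simp only [shapley, Pi.smul_apply, smul_eq_mul, ← mul_sub, mul_sum]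
  exact sum_congr rfl fun _ _ => by ring

theorem shapley_unanimityGame_of_mem {n : ℕ} {T : Finset (Fin n)} {i : Fin n} (hi : i ∈ T) :
    shapley n (unanimityGame T) i = (#T : ℝ)⁻¹ := by
  have hmarg : ∀ S ∈ (univ.erase i).powerset,
      ((n - 1).choose #S : ℝ)⁻¹ * (unanimityGame T (insert i S) - unanimityGame T S)
        = if T.erase i ⊆ S then ((n - 1).choose #S : ℝ)⁻¹ else 0 := by
    intro S hS
    rw [unanimityGame_insert_sub hi fun h => by simpa using mem_powerset.1 hS h, mul_ite,
      mul_one, mul_zero]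
  have hIcc : (univ.erase i).powerset.filter (T.erase i ⊆ ·) = Icc (T.erase i) (univ.erase i) := by
    ext S
    simp only [mem_filter, mem_powerset, mem_Icc]
    exact and_comm
  obtain ⟨s, hs⟩ : ∃ s, #T = s + 1 := Nat.exists_eq_succ_of_ne_zero (card_ne_zero.2 ⟨i, hi⟩)
  obtain ⟨m, hm⟩ : ∃ m, n = s + 1 + m := Nat.exists_eq_add_of_le
    (hs ▸ (card_le_univ T).trans_eq (Fintype.card_fin n))
  have hcard : ∀ R ∈ (univ.erase i \ T.erase i).powerset,
      ((n - 1).choose #(T.erase i ∪ R) : ℝ)⁻¹ = ((s + m).choose (s + #R) : ℝ)⁻¹ := by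
    intro R hR
    rw [card_union_of_disjoint (disjoint_sdiff.mono_right (mem_powerset.1 hR)),
      card_erase_of_mem hi, hs, show n - 1 = s + m by omega, Nat.add_sub_cancel]
  have hM : #(univ.erase i \ T.erase i) = m := by
    rw [card_sdiff_of_subset (erase_subset_erase i (subset_univ T)), card_erase_of_mem hi,
      card_erase_of_mem (mem_univ i), card_univ, Fintype.card_fin]
    omega
  rw [shapley, sum_congr rfl hmarg, ← sum_filter, hIcc,
    sum_Icc_finset_eq_sum_powerset_sdiff (erase_subset_erase i (subset_univ T)),
    sum_congr rfl hcard, sum_powerset_apply_card (fun j => ((s + m).choose (s + j) : ℝ)⁻¹), hM]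
  simp only [nsmul_eq_mul, ← div_eq_mul_inv]
  rw [sum_choose_div_choose_add, hs, hm]
  push_cast
  field_simp
  ring

theorem shapley_unanimityGame_of_notMem {n : ℕ} {T : Finset (Fin n)} {i : Fin n} (hi : i ∉ T) :
    shapley n (unanimityGame T) i = 0 := by
  simp only [shapley, unanimityGame_insert_of_notMem hi, sub_self, mul_zero, sum_const_zero]

theorem shapley_eq_sum_dividend {n : ℕ} (w : Finset (Fin n) → ℝ) (i : Fin n) :
    shapley n w i = ∑ T with i ∈ T, dividend w T / #T := by
  have hu : ∀ T : Finset (Fin n),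
      shapley n (unanimityGame T) i = if i ∈ T then (#T : ℝ)⁻¹ else 0 := fun T => by
    split_ifs with hi
    exacts [shapley_unanimityGame_of_mem hi, shapley_unanimityGame_of_notMem hi]
  conv_lhs => rw [eq_sum_dividend_smul_unanimityGame w]
  simp only [shapley_sum, shapley_smul, hu, mul_ite, mul_zero, ← sum_filter, div_eq_mul_inv]

section ZeroOnEmpty

variable {n : ℕ} {w : Finset (Fin n) → ℝ}

theorem sum_shapley (h0 : w ∅ = 0) : ∑ i, shapley n w i = w univ := by
  simp only [shapley_eq_sum_dividend]
  rw [sum_comm' (t' := univ) (s' := fun T => T) (by simp), ← sum_powerset_dividend w univ,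
    powerset_univ]
  refine sum_congr rfl fun T _ => ?_
  rcases T.eq_empty_or_nonempty with rfl | hT
  · simp [dividend, h0]
  · rw [sum_const, nsmul_eq_mul, mul_div_cancel₀ _ (Nat.cast_ne_zero.2 hT.card_ne_zero)]

theorem shapley_eq_add_sum_dividend (h0 : w ∅ = 0) (i : Fin n) :
    shapley n w i = w {i} + ∑ T with i ∈ T ∧ 2 ≤ #T, dividend w T / #T := by
  have hsplit : (univ.filter fun T : Finset (Fin n) => i ∈ T)
      = insert {i} (univ.filter fun T => i ∈ T ∧ 2 ≤ #T) := by
    ext T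
    simp only [mem_filter, mem_univ, true_and, mem_insert]
    refine ⟨fun hi => (le_or_gt 2 #T).elim (fun h => Or.inr ⟨hi, h⟩) fun h => Or.inl ?_,
      by rintro (rfl | h) <;> simp_all⟩
    exact eq_singleton_iff_unique_mem.2 ⟨hi, fun j hj => card_le_one.1 (by omega) j hj i hi⟩
  rw [shapley_eq_sum_dividend, hsplit, sum_insert (by simp), dividend_singleton, h0]
  simp

theorem shapley_eq_singleton_of_dividend_eq_zero (h0 : w ∅ = 0)
    (h : ∀ T : Finset (Fin n), 2 ≤ #T → dividend w T = 0) (i : Fin n) :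
    shapley n w i = w {i} := by
  rw [shapley_eq_add_sum_dividend h0, sum_eq_zero fun T hT => by
    rw [h T (mem_filter.1 hT).2.2, zero_div], add_zero]

theorem IsPositive.dividend_div_card_nonneg (hpos : IsPositive w) {T : Finset (Fin n)}
    (hT : T.Nonempty) : 0 ≤ dividend w T / #T :=
  div_nonneg (hpos T hT) (Nat.cast_nonneg _)

theorem IsPositive.singleton_le_shapley (hpos : IsPositive w) (h0 : w ∅ = 0) (i : Fin n) :
    w {i} ≤ shapley n w i := by
  rw [shapley_eq_add_sum_dividend h0]
  exact le_add_of_nonneg_right (sum_nonneg fun T hT =>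
    hpos.dividend_div_card_nonneg ⟨i, (mem_filter.1 hT).2.1⟩)

theorem IsPositive.dividend_eq_zero_of_shapley_eq (hpos : IsPositive w) (h0 : w ∅ = 0)
    {i : Fin n} (h : shapley n w i = w {i}) {T : Finset (Fin n)} (hi : i ∈ T) (hT : 2 ≤ #T) :
    dividend w T = 0 := by
  rw [shapley_eq_add_sum_dividend h0, add_eq_left, sum_eq_zero_iff_of_nonneg fun T hT =>
    hpos.dividend_div_card_nonneg ⟨i, (mem_filter.1 hT).2.1⟩] at h
  simpa [Nat.cast_ne_zero, show #T ≠ 0 by omega] using h T (by simp [hi, hT])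

end ZeroOnEmpty

theorem stmt7_general (n : ℕ) (v : Fin n → ℝ)
    (vN : ℝ) (Δ : ℝ) (hΔ : 0 < Δ) :
    (∀ w : Finset (Fin n) → ℝ, IsPositive w → IsExtension v vN w →
        (fun i => shapley n w i) ∈ imputations n v vN) ∧
    (∀ k : Fin n, ¬ ∃ w : Finset (Fin n) → ℝ, IsPositive w ∧ IsExtension v vN w ∧
        (fun i => shapley n w i) = Ik n v Δ k) := by
  refine ⟨fun w hpos ⟨h0, hv, hN⟩ => ⟨(sum_shapley h0).trans hN, fun i => ?_⟩, ?_⟩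
  · exact hv i ▸ hpos.singleton_le_shapley h0 i
  rintro k ⟨w, hpos, ⟨h0, hv, -⟩, hφ⟩
  have hhigher : ∀ T : Finset (Fin n), 2 ≤ #T → dividend w T = 0 := by
    intro T hT
    obtain ⟨i, hiT, hik⟩ := exists_mem_ne (by omega : 1 < #T) k
    refine hpos.dividend_eq_zero_of_shapley_eq h0 ?_ hiT hT
    simpa [Ik, hik, hv] using congrFun hφ i
  have hk := congrFun hφ k
  simp only [shapley_eq_singleton_of_dividend_eq_zero h0 hhigher, Ik, if_true, hv] at hk
  linarith

/-- the weak Shapley value over positive extensions is a proper subset of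
the imputation set: every positive extension has its Shapley value in `I(v)`, and no
positive extension has Shapley value `I^k`. -/
theorem stmt7 (n : ℕ) (hn : 2 ≤ n) (v : Fin n → ℝ) (hv : ∀ i, 0 ≤ v i)
    (vN : ℝ) (Δ : ℝ) (hΔdef : Δ = vN - ∑ i, v i) (hΔ : 0 < Δ) :
    (∀ w : Finset (Fin n) → ℝ, IsPositive w → IsExtension v vN w →
        (fun i => shapley n w i) ∈ imputations n v vN) ∧
    (∀ k : Fin n, ¬ ∃ w : Finset (Fin n) → ℝ, IsPositive w ∧ IsExtension v vN w ∧
        (fun i => shapley n w i) = Ik n v Δ k) :=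
  stmt7_general n v vN Δ hΔ
end

section
/- Let (N,v) be a minimal incomplete game with n ≥ 2 players and total excess Δ > 0, and let A = (α_T)_{T∈N₁} satisfy α_T ≥ 0 and Σ_{T∈N₁} α_T = 1. Then Σ_{j∈N} g^{w_A}({j}) > 0 and the τ-value of w_A (given for convex games with positive total singleton gap by τ_i(w) = b^w_i − (g^w(N)/Σ_{j∈N} g^w({j})) · g^w({i})) satisfies τ_i(w_A) = v({i}) + Δ (Σ_{T∈N₁, i∈T} α_T)/(Σ_{T∈N₁} α_T |T|) for every player i. -/
open Finset

/-- for `Δ > 0` the game `w_A` has positive total singleton gap and its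
τ-value is `τ_i(w_A) = v({i}) + Δ (∑_{T∈N₁, i∈T} α_T)/(∑_{T∈N₁} α_T |T|)`. -/
theorem stmt10 (n : ℕ) (hn : 2 ≤ n) (v : Fin n → ℝ) (vN : ℝ) (Δ : ℝ)
    (hΔdef : Δ = vN - ∑ i, v i) (hΔ : 0 < Δ)
    (A : Finset (Fin n) → ℝ) (hA0 : ∀ T ∈ coalN1 n, 0 ≤ A T)
    (hA1 : ∑ T ∈ coalN1 n, A T = 1) :
    0 < (∑ j, gap (wAgame n v Δ A) {j}) ∧
    ∀ i : Fin n,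
      upperVec (wAgame n v Δ A) i -
        (gap (wAgame n v Δ A) Finset.univ / ∑ j, gap (wAgame n v Δ A) {j}) *
          gap (wAgame n v Δ A) {i}
      = v i + Δ * (∑ T ∈ (coalN1 n).filter (fun T => i ∈ T), A T) /
          (∑ T ∈ coalN1 n, A T * (T.card : ℝ)) := by
  have hwA : ∀ S : Finset (Fin n), wAgame n v Δ A S
      = (∑ j ∈ S, v j) + Δ * ∑ T ∈ (coalN1 n).filter (fun T => T ⊆ S), A T := by
    intro S
    unfold wAgame vTgame
    have h1 : ∀ T ∈ coalN1 n,
        A T * (if T ⊆ S then (∑ j ∈ S, v j) + Δ else ∑ j ∈ S, v j)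
        = A T * (∑ j ∈ S, v j) + (if T ⊆ S then A T * Δ else 0) := by
      intro T _; split <;> ring
    rw [Finset.sum_congr rfl h1, Finset.sum_add_distrib, ← Finset.sum_mul, hA1, one_mul,
      ← Finset.sum_filter, ← Finset.sum_mul]
    ring
  set w := wAgame n v Δ A with hw
  have hEuniv : (coalN1 n).filter (fun T => T ⊆ (Finset.univ : Finset (Fin n))) = coalN1 n :=
    Finset.filter_true_of_mem (fun T _ => Finset.subset_univ T)
  have hwuniv : w Finset.univ = (∑ j, v j) + Δ := by
    rw [hwA, hEuniv, hA1, mul_one]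
  have hwerase : ∀ i : Fin n, w (Finset.univ.erase i)
      = (∑ j ∈ Finset.univ.erase i, v j)
        + Δ * ∑ T ∈ (coalN1 n).filter (fun T => i ∉ T), A T := by
    intro i
    have hf : (coalN1 n).filter (fun T => T ⊆ Finset.univ.erase i)
        = (coalN1 n).filter (fun T => i ∉ T) := by
      apply Finset.filter_congr
      intro T _
      simp [Finset.subset_erase]
    rw [hwA, hf]
  have hwsingle : ∀ i : Fin n, w {i} = v i := by
    intro i
    rw [hwA]
    have he : (coalN1 n).filter (fun T => T ⊆ ({i} : Finset (Fin n))) = ∅ := by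
      apply Finset.filter_false_of_mem
      intro T hT hsub
      have h2 : 2 ≤ T.card := by simpa [coalN1] using hT
      have hc := Finset.card_le_card hsub
      simp at hc
      omega
    rw [he]
    simp
  have hsplit : ∀ i : Fin n,
      (∑ T ∈ (coalN1 n).filter (fun T => i ∈ T), A T)
        + ∑ T ∈ (coalN1 n).filter (fun T => i ∉ T), A T = 1 := by
    intro i
    rw [Finset.sum_filter_add_sum_filter_not, hA1]
  have hupper : ∀ i : Fin n, upperVec w i
      = v i + Δ * ∑ T ∈ (coalN1 n).filter (fun T => i ∈ T), A T := by
    intro i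
    have hv : ∑ j ∈ Finset.univ.erase i, v j = (∑ j, v j) - v i := by
      rw [← Finset.add_sum_erase Finset.univ v (Finset.mem_univ i)]; ring
    unfold upperVec
    rw [hwuniv, hwerase i, hv]
    linear_combination (-Δ) * hsplit i
  have hgapsingle : ∀ i : Fin n, gap w {i}
      = Δ * ∑ T ∈ (coalN1 n).filter (fun T => i ∈ T), A T := by
    intro i
    unfold gap
    rw [Finset.sum_singleton, hwsingle i, hupper i]; ring
  have hdouble : (∑ j, ∑ T ∈ (coalN1 n).filter (fun T => j ∈ T), A T)
      = ∑ T ∈ coalN1 n, A T * (T.card : ℝ) := by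
    have h1 : ∀ j : Fin n, ∑ T ∈ (coalN1 n).filter (fun T => j ∈ T), A T
        = ∑ T ∈ coalN1 n, if j ∈ T then A T else 0 := fun j => Finset.sum_filter _ _
    rw [Finset.sum_congr rfl (fun j _ => h1 j), Finset.sum_comm]
    apply Finset.sum_congr rfl
    intro T _
    rw [Finset.sum_ite_mem, Finset.univ_inter, Finset.sum_const, nsmul_eq_mul, mul_comm]
  have hsumgap : (∑ j, gap w {j}) = Δ * ∑ T ∈ coalN1 n, A T * (T.card : ℝ) := by
    rw [Finset.sum_congr rfl (fun j _ => hgapsingle j), ← Finset.mul_sum, hdouble]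
  have hM2 : (2 : ℝ) ≤ ∑ T ∈ coalN1 n, A T * (T.card : ℝ) := by
    have hle : ∀ T ∈ coalN1 n, A T * 2 ≤ A T * (T.card : ℝ) := by
      intro T hT
      have h2 : 2 ≤ T.card := by simpa [coalN1] using hT
      have h2' : (2:ℝ) ≤ (T.card:ℝ) := by exact_mod_cast h2
      exact mul_le_mul_of_nonneg_left h2' (hA0 T hT)
    calc (2:ℝ) = ∑ T ∈ coalN1 n, A T * 2 := by rw [← Finset.sum_mul, hA1, one_mul]
    _ ≤ _ := Finset.sum_le_sum hle
  have hgapN : gap w Finset.univ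
      = Δ * (∑ T ∈ coalN1 n, A T * (T.card : ℝ)) - Δ := by
    unfold gap
    rw [hwuniv, Finset.sum_congr rfl (fun i _ => hupper i), Finset.sum_add_distrib,
      ← Finset.mul_sum, hdouble]
    ring
  set M := ∑ T ∈ coalN1 n, A T * (T.card : ℝ) with hM
  have hMpos : (0:ℝ) < M := by linarith
  have hΔ' : Δ ≠ 0 := ne_of_gt hΔ
  have hM' : M ≠ 0 := ne_of_gt hMpos
  constructor
  · rw [hsumgap]; positivity
  · intro i
    rw [hsumgap, hgapN, hgapsingle i, hupper i]
    field_simp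
    ring
end

section
/- Let (N,v) be a minimal incomplete game with n ≥ 2 players and total excess Δ > 0. Then for every k ∈ N there is no coefficient vector A = (α_T)_{T∈N₁} with α_T ≥ 0 and Σ_{T∈N₁} α_T = 1 such that the τ-value of w_A (given by τ_i(w_A) = b^{w_A}_i − (g^{w_A}(N)/Σ_{j∈N} g^{w_A}({j})) · g^{w_A}({i})) equals the imputation I^k. -/
open Finset

/-- for `Δ > 0`, no convex-combination coefficient vector `A` makes the
τ-value of `w_A` equal to the imputation `I^k`. -/
theorem stmt11 (n : ℕ) (hn : 2 ≤ n) (v : Fin n → ℝ) (vN : ℝ) (Δ : ℝ)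
    (hΔdef : Δ = vN - ∑ i, v i) (hΔ : 0 < Δ) :
    ∀ k : Fin n, ¬ ∃ A : Finset (Fin n) → ℝ,
      (∀ T ∈ coalN1 n, 0 ≤ A T) ∧ (∑ T ∈ coalN1 n, A T = 1) ∧
      (fun i => upperVec (wAgame n v Δ A) i -
          (gap (wAgame n v Δ A) Finset.univ / ∑ j, gap (wAgame n v Δ A) {j}) *
            gap (wAgame n v Δ A) {i})
        = Ik n v Δ k := by
  intro k
  rintro ⟨A, hA0, hA1, heq⟩
  set w := wAgame n v Δ A with hw
  set c : Fin n → ℝ := fun j => ∑ T ∈ (coalN1 n).filter (fun T => j ∈ T), A T with hc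
  -- general evaluation formula
  have key : ∀ S : Finset (Fin n),
      w S = (∑ j ∈ S, v j) + Δ * ∑ T ∈ (coalN1 n).filter (fun T => T ⊆ S), A T := by
    intro S
    have step : ∀ T ∈ coalN1 n,
        A T * vTgame n v Δ T S
          = A T * (∑ j ∈ S, v j) + (if T ⊆ S then A T * Δ else 0) := by
      intro T _
      unfold vTgame
      split <;> ring
    calc w S = ∑ T ∈ coalN1 n, A T * vTgame n v Δ T S := rfl
      _ = ∑ T ∈ coalN1 n,
            (A T * (∑ j ∈ S, v j) + (if T ⊆ S then A T * Δ else 0)) :=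
        Finset.sum_congr rfl step
      _ = (∑ T ∈ coalN1 n, A T) * (∑ j ∈ S, v j)
            + ∑ T ∈ (coalN1 n).filter (fun T => T ⊆ S), A T * Δ := by
        rw [Finset.sum_add_distrib, ← Finset.sum_mul, Finset.sum_filter]
      _ = (∑ j ∈ S, v j) + Δ * ∑ T ∈ (coalN1 n).filter (fun T => T ⊆ S), A T := by
        rw [hA1, ← Finset.sum_mul]; ring
  have hUniv : w Finset.univ = (∑ j, v j) + Δ := by
    rw [key]
    have : (coalN1 n).filter (fun T => T ⊆ (Finset.univ : Finset (Fin n))) = coalN1 n :=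
      Finset.filter_true_of_mem (fun T _ => Finset.subset_univ T)
    rw [this, hA1, mul_one]
  have hSingle : ∀ j : Fin n, w {j} = v j := by
    intro j
    rw [key]
    have : (coalN1 n).filter (fun T => T ⊆ ({j} : Finset (Fin n))) = ∅ := by
      apply Finset.filter_false_of_mem
      intro T hT hsub
      have h2 : 2 ≤ T.card := (Finset.mem_filter.mp hT).2
      have := Finset.card_le_card hsub
      simp at this
      omega
    rw [this]
    simp
  have hErase : ∀ j : Fin n,
      w (Finset.univ.erase j) = (∑ i ∈ Finset.univ.erase j, v i) + Δ * (1 - c j) := by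
    intro j
    rw [key]
    congr 2
    have hfe : (coalN1 n).filter (fun T => T ⊆ Finset.univ.erase j)
        = (coalN1 n).filter (fun T => ¬ j ∈ T) := by
      apply Finset.filter_congr
      intro T _
      constructor
      · intro hsub hj
        exact (Finset.mem_erase.mp (hsub hj)).1 rfl
      · intro hj
        intro x hx
        exact Finset.mem_erase.mpr ⟨fun h => hj (h ▸ hx), Finset.mem_univ x⟩
    rw [hfe]
    have hsplit := Finset.sum_filter_add_sum_filter_not (coalN1 n)
        (fun T => j ∈ T) A
    rw [hA1] at hsplit
    simp only [hc]
    linarith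
  have hb : ∀ j : Fin n, upperVec w j = v j + Δ * c j := by
    intro j
    have hvj : v j + ∑ i ∈ Finset.univ.erase j, v i = ∑ i, v i :=
      Finset.add_sum_erase Finset.univ v (Finset.mem_univ j)
    unfold upperVec
    rw [hUniv, hErase j]
    linarith
  have hgapS : ∀ j : Fin n, gap w {j} = Δ * c j := by
    intro j
    unfold gap
    rw [Finset.sum_singleton, hb j, hSingle j]
    ring
  set C : ℝ := ∑ j, c j with hCdef
  have hgapN : gap w Finset.univ = Δ * (C - 1) := by
    unfold gap
    rw [hUniv]
    have : ∑ i, upperVec w i = ∑ i, (v i + Δ * c i) :=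
      Finset.sum_congr rfl (fun i _ => hb i)
    rw [this, Finset.sum_add_distrib, ← Finset.mul_sum]
    ring
  have hsumgap : ∑ j, gap w {j} = Δ * C := by
    rw [Finset.sum_congr rfl (fun j _ => hgapS j), ← Finset.mul_sum]
  -- C = ∑ T, A T * |T| ≥ 2
  have hCeq : C = ∑ T ∈ coalN1 n, A T * T.card := by
    simp only [hCdef, hc, Finset.sum_filter]
    rw [Finset.sum_comm]
    apply Finset.sum_congr rfl
    intro T _
    rw [Finset.sum_ite_mem, Finset.univ_inter, Finset.sum_const, nsmul_eq_mul]
    ring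
  have hC2 : 2 ≤ C := by
    rw [hCeq]
    calc (2 : ℝ) = ∑ T ∈ coalN1 n, A T * 2 := by
          rw [← Finset.sum_mul, hA1, one_mul]
      _ ≤ ∑ T ∈ coalN1 n, A T * T.card := by
          apply Finset.sum_le_sum
          intro T hT
          have h2 : 2 ≤ T.card := (Finset.mem_filter.mp hT).2
          have : (2 : ℝ) ≤ (T.card : ℝ) := by exact_mod_cast h2
          nlinarith [hA0 T hT]
  have hck1 : c k ≤ 1 := by
    rw [← hA1]
    exact Finset.sum_le_sum_of_subset_of_nonneg (Finset.filter_subset _ _)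
      (fun T hT _ => hA0 T hT)
  have hC0 : (0 : ℝ) < C := by linarith
  have hck0 : 0 ≤ c k := by
    apply Finset.sum_nonneg
    intro T hT
    exact hA0 T (Finset.mem_filter.mp hT).1
  -- evaluate the hypothesis at k
  have hk := congrFun heq k
  simp only [Ik, if_pos rfl] at hk
  rw [hb k, hgapN, hsumgap, hgapS k] at hk
  have hΔne : Δ ≠ 0 := ne_of_gt hΔ
  have hCne : C ≠ 0 := ne_of_gt hC0
  have hdiv : Δ * (C - 1) / (Δ * C) = (C - 1) / C := by
    rw [mul_div_mul_left _ _ hΔne]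
  rw [hdiv] at hk
  simp only [if_true] at hk
  have hkey : Δ * (c k / C) = Δ := by
    have : (C - 1) / C * (Δ * c k) = Δ * c k - Δ * (c k / C) := by
      field_simp
    rw [this] at hk
    linarith
  have h1 : c k / C = 1 := mul_left_cancel₀ hΔne (hkey.trans (mul_one Δ).symm)
  have : c k = C := by
    field_simp at h1
    linarith
  linarith
end

section
/- Let (N,v) be a minimal incomplete game with n ≥ 2 players and total excess Δ ≥ 0, and let v_N be the extension defined by v_N(S) := Σ_{i∈S} v({i}) for S ≠ N and v_N(N) := v(N). Then for every permutation σ of N the marginal vector m_σ^{v_N} equals I^k where k is the player with σ(k) = n, and consequently the Weber set of v_N equals the imputation set: W(v_N) = I(v). -/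
open Finset

/-- The extension `v_N` given by `v_N(S) = ∑_{i∈S} v({i})` for `S ≠ N`, `v_N(N) = v(N)`. -/
noncomputable def vNgame (n : ℕ) (v : Fin n → ℝ) (vN : ℝ) (S : Finset (Fin n)) : ℝ :=
  if S = Finset.univ then vN else ∑ i ∈ S, v i

/-!
If `k` is the last player of `σ`, every other player `i` joins a coalition that lacks `k`, hence
differs from `N`, so under `v_N` it contributes exactly `v({i})`; player `k` completes `N` and
collects `v(N) - ∑_{j ≠ k} v({j}) = v({k}) + Δ`. Thus the marginal vectors of `v_N` are precisely
the vertices `I^k` of the simplex `I(v) = v + Δ • stdSimplex`, and their convex hull is `I(v)`.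
-/

section MarginalVectors

variable {n : ℕ} {σ : Equiv.Perm (Fin n)} {i k : Fin n}

theorem Equiv.Perm.lt_of_coe_eq_sub_one (hk : (σ k : ℕ) = n - 1) (hi : i ≠ k) : σ i < σ k := by
  have hne : (σ i : ℕ) ≠ σ k := fun h => hi (σ.injective (Fin.ext h))
  have := (σ i).isLt
  rw [Fin.lt_def]
  omega

theorem filter_lt_eq_erase_of_coe_eq_sub_one (hk : (σ k : ℕ) = n - 1) :
    univ.filter (fun j => σ j < σ k) = univ.erase k := by
  ext j
  simp only [mem_filter, mem_univ, true_and, mem_erase, and_true]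
  exact ⟨fun h hjk => (hjk ▸ h).false, fun hjk => σ.lt_of_coe_eq_sub_one hk hjk⟩

theorem notMem_insert_filter_lt_of_coe_eq_sub_one (hk : (σ k : ℕ) = n - 1) (hi : i ≠ k) :
    k ∉ insert i (univ.filter fun j => σ j < σ i) := by
  simp only [mem_insert, mem_filter, mem_univ, true_and, not_or]
  exact ⟨Ne.symm hi, (σ.lt_of_coe_eq_sub_one hk hi).asymm⟩

theorem margVec_eq_upperVec_of_coe_eq_sub_one (w : Finset (Fin n) → ℝ)
    (hk : (σ k : ℕ) = n - 1) : margVec w σ k = upperVec w k := by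
  rw [margVec, upperVec, filter_lt_eq_erase_of_coe_eq_sub_one hk, insert_erase (mem_univ k)]

end MarginalVectors

section ExtensionVN

variable {n : ℕ} (v : Fin n → ℝ) (vN : ℝ)

theorem vNgame_univ : vNgame n v vN univ = vN := by
  rw [vNgame, if_pos rfl]

theorem vNgame_of_ne_univ {S : Finset (Fin n)} (hS : S ≠ univ) :
    vNgame n v vN S = ∑ i ∈ S, v i := by
  rw [vNgame, if_neg hS]

theorem vNgame_of_notMem {S : Finset (Fin n)} {k : Fin n} (hk : k ∉ S) :
    vNgame n v vN S = ∑ i ∈ S, v i :=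
  vNgame_of_ne_univ v vN fun h => hk (h ▸ mem_univ k)

theorem margVec_vNgame {σ : Equiv.Perm (Fin n)} {k : Fin n} (hk : (σ k : ℕ) = n - 1) :
    margVec (vNgame n v vN) σ = Ik n v (vN - ∑ i, v i) k := by
  funext i
  by_cases hik : i = k
  · subst hik
    rw [margVec_eq_upperVec_of_coe_eq_sub_one _ hk, upperVec, vNgame_univ,
      vNgame_of_notMem v vN (notMem_erase i univ), sum_erase_eq_sub (mem_univ i), Ik, if_pos rfl]
    ring
  · have hkS := notMem_insert_filter_lt_of_coe_eq_sub_one hk hik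
    rw [margVec, vNgame_of_notMem v vN hkS,
      vNgame_of_notMem v vN fun h => hkS (mem_insert_of_mem h),
      sum_insert (by simp), Ik, if_neg hik]
    ring

theorem range_margVec_vNgame (hn : 0 < n) :
    Set.range (margVec (vNgame n v vN)) = Set.range (Ik n v (vN - ∑ i, v i)) := by
  let last : Fin n := ⟨n - 1, by omega⟩
  apply Set.Subset.antisymm
  · rintro _ ⟨σ, rfl⟩
    exact ⟨σ.symm last, (margVec_vNgame v vN (by simp [last])).symm⟩
  · rintro _ ⟨k, rfl⟩
    exact ⟨Equiv.swap k last, margVec_vNgame v vN (by simp [last])⟩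

end ExtensionVN

theorem weber_eq_convexHull_range {n : ℕ} (w : Finset (Fin n) → ℝ) :
    weber w = convexHull ℝ (Set.range (margVec w)) := by
  simp only [weber, Set.range, eq_comm]

section Imputations

variable {n : ℕ} (v : Fin n → ℝ) (vN : ℝ)

theorem Ik_eq_add_single (Δ : ℝ) (k : Fin n) : Ik n v Δ k = v + Pi.single k Δ := by
  funext i
  simp only [Ik, Pi.add_apply, Pi.single_apply]
  split_ifs <;> simp

theorem convex_imputations : Convex ℝ (imputations n v vN) := by
  rintro x ⟨hxN, hxv⟩ y ⟨hyN, hyv⟩ a b ha hb hab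
  refine ⟨?_, fun i => ?_⟩
  · simp only [Pi.add_apply, Pi.smul_apply, smul_eq_mul, sum_add_distrib, ← mul_sum, hxN, hyN]
    rw [← add_mul, hab, one_mul]
  · calc v i = a * v i + b * v i := by rw [← add_mul, hab, one_mul]
      _ ≤ a * x i + b * y i :=
        add_le_add (mul_le_mul_of_nonneg_left (hxv i) ha) (mul_le_mul_of_nonneg_left (hyv i) hb)

theorem Ik_mem_imputations (hΔ : 0 ≤ vN - ∑ i, v i) (k : Fin n) :
    Ik n v (vN - ∑ i, v i) k ∈ imputations n v vN := by
  refine ⟨?_, fun i => ?_⟩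
  · simp only [Ik_eq_add_single, Pi.add_apply, sum_add_distrib, sum_pi_single', mem_univ, if_true]
    ring
  · rw [Ik_eq_add_single, Pi.add_apply, le_add_iff_nonneg_right]
    exact (Pi.single_nonneg (α := fun _ : Fin n => ℝ)).2 hΔ i

theorem imputations_subset_convexHull_range_Ik (hn : 0 < n) :
    imputations n v vN ⊆ convexHull ℝ (Set.range (Ik n v (vN - ∑ i, v i))) := by
  rintro x ⟨hxN, hxv⟩
  set Δ := vN - ∑ i, v i
  have hsurplus : ∑ i, (x i - v i) = Δ := by rw [sum_sub_distrib, hxN]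
  have hΔ0 : 0 ≤ Δ := hsurplus ▸ sum_nonneg fun i _ => sub_nonneg.2 (hxv i)
  rcases hΔ0.eq_or_lt with hΔ | hΔ
  · -- with no surplus to share, `x = v = I^k` for every `k`
    have hxv' : x = v := by
      funext i
      have := (sum_eq_zero_iff_of_nonneg fun j _ => sub_nonneg.2 (hxv j)).1
        (hsurplus.trans hΔ.symm) i (mem_univ i)
      linarith
    refine subset_convexHull ℝ _ ⟨⟨0, hn⟩, ?_⟩
    rw [Ik_eq_add_single, ← hΔ, Pi.single_zero, add_zero, hxv']
  · have hx : x = ∑ k, ((x k - v k) / Δ) • Ik n v Δ k := by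
      simp only [Ik_eq_add_single, smul_add, sum_add_distrib, ← sum_smul, ← sum_div, hsurplus,
        div_self hΔ.ne', one_smul, ← Pi.single_smul, smul_eq_mul, div_mul_cancel₀ _ hΔ.ne',
        univ_sum_single (fun k => x k - v k)]
      ext i
      simp
    rw [hx]
    refine (convex_convexHull ℝ _).sum_mem (fun k _ => ?_) ?_
      fun k _ => subset_convexHull ℝ _ ⟨k, rfl⟩
    · exact div_nonneg (sub_nonneg.2 (hxv k)) hΔ.le
    · rw [← sum_div, hsurplus, div_self hΔ.ne']

theorem convexHull_range_Ik (hn : 0 < n) (hΔ : 0 ≤ vN - ∑ i, v i) :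
    convexHull ℝ (Set.range (Ik n v (vN - ∑ i, v i))) = imputations n v vN :=
  (convexHull_min (Set.range_subset_iff.2 (Ik_mem_imputations v vN hΔ))
    (convex_imputations v vN)).antisymm (imputations_subset_convexHull_range_Ik v vN hn)

end Imputations

/-- every marginal vector of `v_N` equals `I^k` where `k` is the last player
of the permutation, and the Weber set of `v_N` equals the imputation set. -/
theorem stmt14 (n : ℕ) (hn : 2 ≤ n) (v : Fin n → ℝ) (vN : ℝ) (Δ : ℝ)
    (hΔdef : Δ = vN - ∑ i, v i) (hΔ : 0 ≤ Δ) :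
    (∀ σ : Equiv.Perm (Fin n), ∀ k : Fin n, (σ k : ℕ) = n - 1 →
        margVec (vNgame n v vN) σ = Ik n v Δ k) ∧
    weber (vNgame n v vN) = imputations n v vN := by
  subst hΔdef
  have hn0 : 0 < n := by omega
  refine ⟨fun σ k hk => margVec_vNgame v vN hk, ?_⟩
  rw [weber_eq_convexHull_range, range_margVec_vNgame v vN hn0, convexHull_range_Ik v vN hn0 hΔ]
end

section
/- Let (N,v) be a minimal incomplete game with n ≥ 2 players. Then (N,v) admits a 1-convex extension if and only if its total excess satisfies Δ ≥ 0. -/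
open Finset

/-- a minimal incomplete game admits a 1-convex extension iff `Δ ≥ 0`. -/
theorem stmt16 (n : ℕ) (hn : 2 ≤ n) (v : Fin n → ℝ) (vN : ℝ) (Δ : ℝ)
    (hΔdef : Δ = vN - ∑ i, v i) :
    (∃ w : Finset (Fin n) → ℝ, IsExtension v vN w ∧ IsOneConvex w) ↔ 0 ≤ Δ := by
  have h2R : (2:ℝ) ≤ (n:ℝ) := by exact_mod_cast hn
  constructor
  · rintro ⟨w, ⟨h0, hsing, hN⟩, hup, hS⟩
    set b := upperVec w with hbdef
    have hB : vN ≤ ∑ j, b j := hN ▸ hup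
    have key : ∀ i : Fin n, v i ≤ vN - ((∑ j, b j) - b i) := by
      intro i
      have h := hS {i} (Finset.singleton_nonempty i)
      rw [hsing i, hN] at h
      have hsd : ∑ j ∈ Finset.univ \ {i}, b j = (∑ j, b j) - b i := by
        rw [Finset.sum_sdiff_eq_sub (Finset.subset_univ {i}), Finset.sum_singleton]
      linarith [h, hsd ▸ h]
    have hsum : ∑ i, v i ≤ ∑ i : Fin n, (vN - ((∑ j, b j) - b i)) :=
      Finset.sum_le_sum (fun i _ => key i)
    have heval : ∑ i : Fin n, (vN - ((∑ j, b j) - b i))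
        = (n:ℝ) * vN - (n:ℝ) * (∑ j, b j) + ∑ j, b j := by
      rw [Finset.sum_sub_distrib, Finset.sum_sub_distrib, Finset.sum_const,
        Finset.sum_const, Finset.card_univ, Fintype.card_fin, nsmul_eq_mul, nsmul_eq_mul]
      ring
    rw [heval] at hsum
    nlinarith [hB, hsum]
  · intro hΔ
    have h1 : (1:ℝ) ≤ (n:ℝ) - 1 := by linarith
    set c : ℝ := Δ / ((n:ℝ) - 1) with hc
    have hcn : 0 ≤ c := div_nonneg hΔ (by linarith)
    have hΔc : Δ = ((n:ℝ) - 1) * c := by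
      rw [hc]; field_simp
    set w : Finset (Fin n) → ℝ := fun S =>
      if S.card ≤ 1 then ∑ i ∈ S, v i else vN - ∑ i ∈ Finset.univ \ S, (v i + c) with hw
    have hwuniv : w Finset.univ = vN := by
      simp only [hw]
      rw [if_neg (by rw [Finset.card_univ, Fintype.card_fin]; omega),
        Finset.sdiff_self, Finset.sum_empty, sub_zero]
    have herasecard : ∀ i : Fin n, (Finset.univ.erase i).card = n - 1 := by
      intro i
      rw [Finset.card_erase_of_mem (Finset.mem_univ i), Finset.card_univ, Fintype.card_fin]
    have hb : ∀ i, upperVec w i = v i + c := by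
      intro i
      unfold upperVec
      rw [hwuniv]
      rcases eq_or_lt_of_le hn with h2 | h3
      · have hn1 : ((n:ℝ) - 1) = 1 := by rw [← h2]; norm_num
        simp only [hw]
        rw [if_pos (by rw [herasecard i]; omega)]
        have hes : ∑ j ∈ Finset.univ.erase i, v j = (∑ j, v j) - v i := by
          rw [eq_sub_iff_add_eq, Finset.sum_erase_add Finset.univ v (Finset.mem_univ i)]
        rw [hes, hc, hn1, div_one, hΔdef]; ring
      · simp only [hw]
        rw [if_neg (by rw [herasecard i]; omega)]
        have hsd : Finset.univ \ Finset.univ.erase i = {i} := by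
          ext j; simp [eq_comm, em]
        rw [hsd, Finset.sum_singleton]; ring
    refine ⟨w, ⟨?_, ?_, hwuniv⟩, ?_, ?_⟩
    · simp [hw]
    · intro i; simp [hw]
    · rw [hwuniv]
      have : ∑ i, upperVec w i = (∑ i, v i) + (n:ℝ) * c := by
        rw [Finset.sum_congr rfl (fun i _ => hb i), Finset.sum_add_distrib,
          Finset.sum_const, Finset.card_univ, Fintype.card_fin, nsmul_eq_mul]
      rw [this]
      linarith [hΔc, hcn]
    · intro S hSne
      rw [hwuniv, Finset.sum_congr rfl (fun i _ => hb i)]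
      rcases le_or_gt S.card 1 with h1' | h2'
      · obtain ⟨i, rfl⟩ := Finset.card_eq_one.mp
          (le_antisymm h1' (Finset.one_le_card.mpr hSne))
        simp only [hw]
        rw [if_pos (by simp), Finset.sum_singleton]
        rw [Finset.sdiff_singleton_eq_erase]
        have hsplit : ∑ j ∈ Finset.univ.erase i, (v j + c)
            = ((∑ j, v j) - v i) + ((n:ℝ) - 1) * c := by
          rw [Finset.sum_add_distrib, Finset.sum_const, herasecard i, nsmul_eq_mul]
          have hes : ∑ j ∈ Finset.univ.erase i, v j = (∑ j, v j) - v i := by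
            rw [eq_sub_iff_add_eq, Finset.sum_erase_add Finset.univ v (Finset.mem_univ i)]
          have hcast : ((n - 1 : ℕ) : ℝ) = (n:ℝ) - 1 := by
            have : 1 ≤ n := by omega
            push_cast [this]; ring
          rw [hes, hcast]
        rw [hsplit]
        linarith [hΔc]
      · simp only [hw]
        rw [if_neg (by omega)]
end

section
/- Let (N,v) be a minimal incomplete game with n ≥ 4 players and total excess Δ ≥ 0. Then the weak Weber set over 1-convex extensions strictly contains the imputation set: I(v) is contained in the union of the Weber sets of all 1-convex extensions of (N,v), and for every M ∈ ℝ there exist a 1-convex extension w of (N,v), a permutation σ of N, and a player i such that (m_σ^w)_i > M. -/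
open Finset

/-!
For an imputation `x`, the game equal to `x(S)` on coalitions of at least two players and to
`v(S)` on smaller ones is a 1-convex extension whose upper vector is `x`. Its marginal vectors
for two orders starting with `a, b` and with `b, a` coincide with `x` off `{a, b}` and equal
`x + (x_a - v_a)(e_b - e_a)` and `x - (x_b - v_b)(e_b - e_a)`, so `x` lies on the segment
between them.

Lowering a 1-convex extension on a coalition `T` with `2 ≤ |T| ≤ n - 2` touches neither the
prescribed values nor the upper vector, so it stays a 1-convex extension, while the marginal
contribution of the player joining right after `T` grows by the amount of lowering. This is
where `n ≥ 4` enters.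
-/

open Function

lemma mem_segment_sub_smul_add_smul {E : Type*} [AddCommGroup E] [Module ℝ E] (x d : E)
    {a b : ℝ} (ha : 0 ≤ a) (hb : 0 ≤ b) : x ∈ segment ℝ (x - b • d) (x + a • d) := by
  rcases (add_nonneg ha hb).eq_or_lt with hab | hab
  · obtain ⟨rfl, rfl⟩ : a = 0 ∧ b = 0 := ⟨by linarith, by linarith⟩
    simp
  · refine ⟨a / (a + b), b / (a + b), by positivity, by positivity, by field_simp, ?_⟩
    have hsum : a / (a + b) + b / (a + b) = 1 := by field_simp
    have hcross : a / (a + b) * b = b / (a + b) * a := by ring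
    calc (a / (a + b)) • (x - b • d) + (b / (a + b)) • (x + a • d)
        = (a / (a + b) + b / (a + b)) • x + (b / (a + b) * a - a / (a + b) * b) • d := by
          module
      _ = x := by rw [hsum, hcross, sub_self, one_smul, zero_smul, add_zero]

section Predecessors

variable {n : ℕ}

def predecessors (σ : Equiv.Perm (Fin n)) (i : Fin n) : Finset (Fin n) :=
  univ.filter fun j => σ j < σ i

@[simp]
lemma mem_predecessors {σ : Equiv.Perm (Fin n)} {i j : Fin n} :
    j ∈ predecessors σ i ↔ σ j < σ i := by
  simp [predecessors]

lemma card_predecessors (σ : Equiv.Perm (Fin n)) (i : Fin n) :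
    (predecessors σ i).card = σ i := by
  rw [← Fin.card_Iio, ← card_map σ.toEmbedding]
  congr 1
  ext k
  simp

lemma margVec_eq (w : Finset (Fin n) → ℝ) (σ : Equiv.Perm (Fin n)) (i : Fin n) :
    margVec w σ i = w (insert i (predecessors σ i)) - w (predecessors σ i) :=
  rfl

end Predecessors

section Games

variable {n : ℕ}

lemma margVec_of_val_eq_zero (w : Finset (Fin n) → ℝ) {σ : Equiv.Perm (Fin n)} {i : Fin n}
    (hi : (σ i : ℕ) = 0) : margVec w σ i = w {i} - w ∅ := by
  have hP : predecessors σ i = ∅ := card_eq_zero.1 (by rw [card_predecessors, hi])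
  rw [margVec_eq, hP, insert_empty]

lemma margVec_of_val_eq_one (w : Finset (Fin n) → ℝ) {σ : Equiv.Perm (Fin n)} {a b : Fin n}
    (ha : (σ a : ℕ) = 0) (hb : (σ b : ℕ) = 1) : margVec w σ b = w {b, a} - w {a} := by
  obtain ⟨j, hj⟩ := card_eq_one.1 ((card_predecessors σ b).trans hb)
  have haP : a ∈ predecessors σ b := mem_predecessors.2 (by rw [Fin.lt_def, ha, hb]; omega)
  rw [hj, mem_singleton] at haP
  rw [margVec_eq, hj, ← haP]

lemma isOneConvex_of_upperVec_mem_core {w : Finset (Fin n) → ℝ} (h : upperVec w ∈ core w) :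
    IsOneConvex w := by
  obtain ⟨hN, hS⟩ := h
  refine ⟨hN.ge, fun S _ => ?_⟩
  have := sum_sdiff (subset_univ S) (f := upperVec w)
  linarith [hS S]

lemma upperVec_update (w : Finset (Fin n) → ℝ) {T : Finset (Fin n)} (hT : T.card + 2 ≤ n)
    (y : ℝ) : upperVec (update w T y) = upperVec w := by
  have hne : ∀ S : Finset (Fin n), n - 1 ≤ S.card → S ≠ T := by
    rintro S hS rfl
    omega
  funext i
  simp only [upperVec]
  rw [update_of_ne (hne _ (by simp)), update_of_ne (hne _ (by simp [card_erase_of_mem]))]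

lemma IsOneConvex.update {w : Finset (Fin n) → ℝ} (hw : IsOneConvex w) {T : Finset (Fin n)}
    (hT : T.card + 2 ≤ n) {y : ℝ} (hy : y ≤ w T) : IsOneConvex (update w T y) := by
  have hTN : (univ : Finset (Fin n)) ≠ T := by
    rintro rfl
    simp at hT
  obtain ⟨hN, hS⟩ := hw
  rw [IsOneConvex, upperVec_update w hT, update_of_ne hTN]
  refine ⟨hN, fun S hSne => ?_⟩
  by_cases hST : S = T
  · subst hST
    rw [update_self]
    exact hy.trans (hS S hSne)
  · rw [update_of_ne hST]
    exact hS S hSne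

lemma IsExtension.update {v : Fin n → ℝ} {vN : ℝ} {w : Finset (Fin n) → ℝ}
    (hw : IsExtension v vN w) {T : Finset (Fin n)} (hT : 2 ≤ T.card) (hTn : T.card < n)
    (y : ℝ) : IsExtension v vN (update w T y) := by
  have hne : ∀ S : Finset (Fin n), (S.card < 2 ∨ n ≤ S.card) → S ≠ T := by
    rintro S hS rfl
    omega
  obtain ⟨h0, h1, hN⟩ := hw
  refine ⟨?_, fun i => ?_, ?_⟩
  · rw [update_of_ne (hne _ (by simp)), h0]
  · rw [update_of_ne (hne _ (by simp)), h1]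
  · rw [update_of_ne (hne _ (by simp)), hN]

lemma margVec_update_predecessors (w : Finset (Fin n) → ℝ) (σ : Equiv.Perm (Fin n)) (i : Fin n)
    (y : ℝ) :
    margVec (update w (predecessors σ i) y) σ i = w (insert i (predecessors σ i)) - y := by
  have hi : i ∉ predecessors σ i := by simp
  rw [margVec_eq, update_self, update_of_ne (ne_insert_of_notMem _ _ hi).symm]

lemma exists_isOneConvex_extension_lt_margVec (hn : 4 ≤ n) {v : Fin n → ℝ} {vN : ℝ}
    {w : Finset (Fin n) → ℝ} (hw : IsExtension v vN w) (hw1 : IsOneConvex w) (M : ℝ) :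
    ∃ (w' : Finset (Fin n) → ℝ) (σ : Equiv.Perm (Fin n)) (i : Fin n),
      IsExtension v vN w' ∧ IsOneConvex w' ∧ M < margVec w' σ i := by
  let i : Fin n := ⟨2, by omega⟩
  let P := predecessors 1 i
  have hP : P.card = 2 := card_predecessors 1 i
  let y := min (w P) (w (insert i P) - M - 1)
  refine ⟨update w P y, 1, i, hw.update (by omega) (by omega) y,
    hw1.update (by omega) (min_le_left _ _), ?_⟩
  rw [margVec_update_predecessors]
  linarith [min_le_right (w P) (w (insert i P) - M - 1)]

end Games

section ImputationGame

variable {n : ℕ} (v x : Fin n → ℝ)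

def imputationGame (S : Finset (Fin n)) : ℝ :=
  if 2 ≤ S.card then ∑ j ∈ S, x j else ∑ j ∈ S, v j

variable {v x}

lemma imputationGame_of_two_le {S : Finset (Fin n)} (h : 2 ≤ S.card) :
    imputationGame v x S = ∑ j ∈ S, x j :=
  if_pos h

lemma imputationGame_of_lt_two {S : Finset (Fin n)} (h : S.card < 2) :
    imputationGame v x S = ∑ j ∈ S, v j :=
  if_neg (by omega)

lemma upperVec_imputationGame (hn : 3 ≤ n) : upperVec (imputationGame v x) = x := by
  funext i
  rw [upperVec, imputationGame_of_two_le (by simp; omega),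
    imputationGame_of_two_le (by simp [card_erase_of_mem]; omega),
    ← sum_erase_add univ x (mem_univ i), add_sub_cancel_left]

lemma isExtension_imputationGame (hn : 2 ≤ n) {vN : ℝ} (hx : ∑ i, x i = vN) :
    IsExtension v vN (imputationGame v x) := by
  refine ⟨?_, fun i => ?_, ?_⟩
  · rw [imputationGame_of_lt_two (by simp), sum_empty]
  · rw [imputationGame_of_lt_two (by simp), sum_singleton]
  · rw [imputationGame_of_two_le (by simp; omega), hx]

lemma isOneConvex_imputationGame (hn : 3 ≤ n) (hvx : ∀ i, v i ≤ x i) :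
    IsOneConvex (imputationGame v x) := by
  apply isOneConvex_of_upperVec_mem_core
  rw [upperVec_imputationGame hn]
  refine ⟨(imputationGame_of_two_le (by simp; omega)).symm, fun S => ?_⟩
  by_cases hS : 2 ≤ S.card
  · exact (imputationGame_of_two_le hS).le
  · rw [imputationGame_of_lt_two (by omega)]
    exact sum_le_sum fun i _ => hvx i

lemma margVec_imputationGame_of_two_le {σ : Equiv.Perm (Fin n)} {i : Fin n}
    (hi : 2 ≤ (σ i : ℕ)) : margVec (imputationGame v x) σ i = x i := by
  have hP := card_predecessors σ i
  have hiP : i ∉ predecessors σ i := by simp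
  rw [margVec_eq, imputationGame_of_two_le (S := predecessors σ i) (by omega),
    imputationGame_of_two_le (by rw [card_insert_of_notMem hiP]; omega),
    sum_insert hiP, add_sub_cancel_right]

lemma margVec_imputationGame {σ : Equiv.Perm (Fin n)} {a b : Fin n} (ha : (σ a : ℕ) = 0)
    (hb : (σ b : ℕ) = 1) :
    margVec (imputationGame v x) σ = x + (x a - v a) • (Pi.single b 1 - Pi.single a 1) := by
  have hab : a ≠ b := by
    rintro rfl
    omega
  funext i
  by_cases hia : i = a
  · subst hia
    rw [margVec_of_val_eq_zero _ ha, imputationGame_of_lt_two (by simp),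
      imputationGame_of_lt_two (by simp)]
    simp [hab]
  by_cases hib : i = b
  · subst hib
    rw [margVec_of_val_eq_one _ ha hb, imputationGame_of_two_le (by simp [Ne.symm hab]),
      imputationGame_of_lt_two (by simp)]
    simp [Ne.symm hab, sum_pair (Ne.symm hab)]
    ring
  · have hi : 2 ≤ (σ i : ℕ) := by
      have h0 : σ i ≠ σ a := σ.injective.ne hia
      have h1 : σ i ≠ σ b := σ.injective.ne hib
      rw [Ne, Fin.ext_iff] at h0 h1
      omega
    rw [margVec_imputationGame_of_two_le hi]
    simp [hia, hib]

lemma mem_weber_imputationGame (hn : 2 ≤ n) (hvx : ∀ i, v i ≤ x i) :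
    x ∈ weber (imputationGame v x) := by
  let a : Fin n := ⟨0, by omega⟩
  let b : Fin n := ⟨1, by omega⟩
  have hab : a ≠ b := by simp [a, b, Fin.ext_iff]
  set d : Fin n → ℝ := Pi.single b 1 - Pi.single a 1
  have h₁ : margVec (imputationGame v x) 1 = x + (x a - v a) • d :=
    margVec_imputationGame rfl rfl
  have h₂ : margVec (imputationGame v x) (Equiv.swap a b) = x - (x b - v b) • d := by
    rw [margVec_imputationGame (a := b) (b := a) (by simp [a]) (by simp [b])]
    module
  have hmem : ∀ σ, margVec (imputationGame v x) σ ∈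
      {m | ∃ σ : Equiv.Perm (Fin n), m = margVec (imputationGame v x) σ} := fun σ => ⟨σ, rfl⟩
  exact segment_subset_convexHull (h₂ ▸ hmem _) (h₁ ▸ hmem 1)
    (mem_segment_sub_smul_add_smul x d (sub_nonneg.2 (hvx a)) (sub_nonneg.2 (hvx b)))

end ImputationGame

lemma nonempty_imputations {n : ℕ} (hn : 0 < n) {v : Fin n → ℝ} {vN : ℝ}
    (hΔ : 0 ≤ vN - ∑ i, v i) : (imputations n v vN).Nonempty := by
  refine ⟨v + Pi.single ⟨0, hn⟩ (vN - ∑ i, v i), ?_, fun i => ?_⟩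
  · simp [sum_add_distrib]
  · rw [Pi.add_apply, le_add_iff_nonneg_right, Pi.single_apply]
    split_ifs <;> simp [hΔ]

/-- the weak Weber set over 1-convex extensions strictly contains `I(v)`:
every imputation lies in the Weber set of some 1-convex extension, and marginal vectors of
1-convex extensions are unbounded above. -/
theorem stmt17 (n : ℕ) (hn : 4 ≤ n) (v : Fin n → ℝ) (vN : ℝ) (Δ : ℝ)
    (hΔdef : Δ = vN - ∑ i, v i) (hΔ : 0 ≤ Δ) :
    (∀ x ∈ imputations n v vN, ∃ w : Finset (Fin n) → ℝ,
        IsExtension v vN w ∧ IsOneConvex w ∧ x ∈ weber w) ∧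
    (∀ M : ℝ, ∃ (w : Finset (Fin n) → ℝ) (σ : Equiv.Perm (Fin n)) (i : Fin n),
        IsExtension v vN w ∧ IsOneConvex w ∧ M < margVec w σ i) := by
  have hweber : ∀ x ∈ imputations n v vN, ∃ w : Finset (Fin n) → ℝ,
      IsExtension v vN w ∧ IsOneConvex w ∧ x ∈ weber w := by
    rintro x ⟨hsum, hvx⟩
    exact ⟨imputationGame v x, isExtension_imputationGame (by omega) hsum,
      isOneConvex_imputationGame (by omega) hvx, mem_weber_imputationGame (by omega) hvx⟩
  refine ⟨hweber, fun M => ?_⟩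
  obtain ⟨x, hx⟩ := nonempty_imputations (by omega) (hΔdef ▸ hΔ)
  obtain ⟨w, hw, hw1, -⟩ := hweber x hx
  exact exists_isOneConvex_extension_lt_margVec hn hw hw1 M
end

section
/- Let (N,v) be a minimal incomplete game with n ≥ 3 players, v({i}) ≥ 0 for all i ∈ N, and total excess Δ > 0. Then for every x ∈ I(v) there exists a two-element coalition T ⊆ N such that x does not belong to the core of the positive extension v_T; consequently the intersection of the cores of all positive extensions of (N,v) is empty. -/
open Finset

open Finset in
lemma mystmt18_sum_pow_neg_one {n : ℕ} (B : Finset (Fin n)) :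
    ∑ R ∈ B.powerset, ((-1:ℝ))^(B.card - R.card) = if B = ∅ then 1 else 0 := by
  have key : ∀ R ∈ B.powerset, ((-1:ℝ))^(B.card - R.card) = (-1)^B.card * (-1)^R.card := by
    intro R hR
    have hle : R.card ≤ B.card := card_le_card (mem_powerset.1 hR)
    have h1 : ((-1:ℝ))^(B.card - R.card) * (-1)^R.card = (-1)^B.card := by
      rw [← pow_add, Nat.sub_add_cancel hle]
    have h2 : ((-1:ℝ))^R.card * (-1)^R.card = 1 := by
      rw [← pow_add, ← two_mul, pow_mul]; norm_num
    calc ((-1:ℝ))^(B.card - R.card)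
        = ((-1:ℝ))^(B.card - R.card) * ((-1)^R.card * (-1)^R.card) := by rw [h2, mul_one]
      _ = (-1)^B.card * (-1)^R.card := by rw [← mul_assoc, h1]
  rw [Finset.sum_congr rfl key, ← Finset.mul_sum]
  have : ∑ R ∈ B.powerset, ((-1:ℝ))^R.card = if B = ∅ then 1 else 0 := by
    have := @Finset.sum_powerset_neg_one_pow_card (Fin n) _ B
    have h := congrArg (fun z : ℤ => (z : ℝ)) this
    push_cast at h
    convert h using 2
  rw [this]
  by_cases hB : B = ∅ <;> simp [hB]

noncomputable def mystmt18_uGame {n : ℕ} (A : Finset (Fin n)) (S : Finset (Fin n)) : ℝ :=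
  if A ⊆ S then 1 else 0

open Finset in
lemma mystmt18_dividend_uGame {n : ℕ} (A T : Finset (Fin n)) :
    dividend (mystmt18_uGame A) T = if T = A then 1 else 0 := by
  unfold dividend mystmt18_uGame
  rw [Finset.sum_congr rfl (fun S _ => by rw [mul_ite, mul_one, mul_zero]),
    Finset.sum_ite, Finset.sum_const_zero, add_zero]
  by_cases hAT : A ⊆ T
  · have himg : T.powerset.filter (fun S => A ⊆ S) = (T \ A).powerset.image (fun R => R ∪ A) := by
      ext S
      simp only [mem_filter, mem_powerset, mem_image]
      constructor
      · rintro ⟨hST, hAS⟩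
        exact ⟨S \ A, sdiff_subset_sdiff hST le_rfl, Finset.sdiff_union_of_subset hAS⟩
      · rintro ⟨R, hR, rfl⟩
        exact ⟨union_subset ((hR.trans sdiff_subset)) hAT, subset_union_right⟩
    rw [himg, Finset.sum_image]
    · have hcard : ∀ R ∈ (T \ A).powerset, ((-1:ℝ))^(T.card - (R ∪ A).card)
          = (-1)^((T \ A).card - R.card) := by
        intro R hR
        have hR' := mem_powerset.1 hR
        have hdisj : Disjoint R A := (Finset.sdiff_disjoint.mono_left hR' : _)
        rw [card_union_of_disjoint hdisj, card_sdiff_of_subset hAT]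
        congr 1
        have h1 : A.card ≤ T.card := card_le_card hAT
        have h2 : R.card ≤ T.card - A.card := by rw [← card_sdiff_of_subset hAT]; exact card_le_card hR'
        omega
      rw [Finset.sum_congr rfl hcard, mystmt18_sum_pow_neg_one]
      have : (T \ A = ∅) ↔ (T = A) := by
        rw [Finset.sdiff_eq_empty_iff_subset]
        exact ⟨fun h => subset_antisymm h hAT, fun h => h ▸ le_rfl⟩
      simp [this]
    · intro R1 h1 R2 h2 heq
      have d1 : Disjoint R1 A := (Finset.sdiff_disjoint.mono_left (mem_powerset.1 h1) : _)
      have d2 : Disjoint R2 A := (Finset.sdiff_disjoint.mono_left (mem_powerset.1 h2) : _)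
      have := congrArg (fun S => S \ A) heq
      simpa [Finset.union_sdiff_cancel_right d1, Finset.union_sdiff_cancel_right d2] using this
  · have he : T.powerset.filter (fun S => A ⊆ S) = ∅ := by
      ext S; simp only [mem_filter, mem_powerset, Finset.notMem_empty, iff_false, not_and]
      exact fun hST hAS => hAT (hAS.trans hST)
    rw [he]
    have : T ≠ A := fun h => hAT (h ▸ le_rfl)
    simp [this]

open Finset in
lemma mystmt18_vTgame_pt {n : ℕ} (v : Fin n → ℝ) (Δ : ℝ) (T S : Finset (Fin n)) :
    vTgame n v Δ T S = (∑ j, v j * mystmt18_uGame {j} S) + Δ * mystmt18_uGame T S := by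
  have h1 : (∑ j, v j * mystmt18_uGame {j} S) = ∑ j ∈ S, v j := by
    simp only [mystmt18_uGame, Finset.singleton_subset_iff, mul_ite, mul_one, mul_zero]
    rw [Finset.sum_ite_mem]
    simp
  unfold vTgame mystmt18_uGame
  by_cases hTS : T ⊆ S <;> simp [hTS, h1]

open Finset in
lemma mystmt18_dividend_vT {n : ℕ} (v : Fin n → ℝ) (Δ : ℝ) (T T' : Finset (Fin n)) :
    dividend (vTgame n v Δ T) T'
      = (∑ j, v j * (if T' = {j} then 1 else 0)) + Δ * (if T' = T then 1 else 0) := by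
  unfold dividend
  have step : ∀ S ∈ T'.powerset, (-1:ℝ)^(T'.card - S.card) * vTgame n v Δ T S
      = (∑ j, v j * ((-1:ℝ)^(T'.card - S.card) * mystmt18_uGame {j} S))
        + Δ * ((-1:ℝ)^(T'.card - S.card) * mystmt18_uGame T S) := by
    intro S _
    rw [mystmt18_vTgame_pt, mul_add, Finset.mul_sum]
    congr 1
    · exact Finset.sum_congr rfl fun j _ => by ring
    · ring
  rw [Finset.sum_congr rfl step, Finset.sum_add_distrib, Finset.sum_comm]
  congr 1
  · refine Finset.sum_congr rfl fun j _ => ?_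
    rw [← Finset.mul_sum]
    rw [show (∑ S ∈ T'.powerset, (-1:ℝ)^(T'.card - S.card) * mystmt18_uGame {j} S)
        = dividend (mystmt18_uGame {j}) T' from rfl, mystmt18_dividend_uGame]
  · rw [← Finset.mul_sum]
    rw [show (∑ S ∈ T'.powerset, (-1:ℝ)^(T'.card - S.card) * mystmt18_uGame T S)
        = dividend (mystmt18_uGame T) T' from rfl, mystmt18_dividend_uGame]

open Finset in
lemma mystmt18_vT_pos_ext (n : ℕ) (hn : 3 ≤ n) (v : Fin n → ℝ) (hv : ∀ i, 0 ≤ v i)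
    (vN : ℝ) (Δ : ℝ) (hΔdef : Δ = vN - ∑ i, v i) (hΔ : 0 < Δ)
    (T : Finset (Fin n)) (hT : 2 ≤ T.card) :
    IsPositive (vTgame n v Δ T) ∧ IsExtension v vN (vTgame n v Δ T) := by
  constructor
  · intro T' _
    rw [mystmt18_dividend_vT]
    apply add_nonneg
    · exact Finset.sum_nonneg fun j _ => mul_nonneg (hv j) (by positivity)
    · exact mul_nonneg hΔ.le (by positivity)
  · refine ⟨?_, ?_, ?_⟩
    · have hTne : T ≠ ∅ := by intro h; rw [h] at hT; simp at hT
      simp [vTgame, Finset.subset_empty, hTne]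
    · intro i
      have hns : ¬ T ⊆ {i} := by
        intro h
        have := card_le_card h
        simp at this
        omega
      simp [vTgame, hns]
    · have : T ⊆ Finset.univ := subset_univ T
      simp only [vTgame, if_pos this]
      rw [hΔdef]; ring


/-- for every imputation `x` there is a two-element coalition `T` with
`x ∉ C(v_T)`; consequently the intersection of the cores of all positive extensions is empty. -/
theorem stmt18 (n : ℕ) (hn : 3 ≤ n) (v : Fin n → ℝ) (hv : ∀ i, 0 ≤ v i)
    (vN : ℝ) (Δ : ℝ) (hΔdef : Δ = vN - ∑ i, v i) (hΔ : 0 < Δ) :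
    (∀ x ∈ imputations n v vN, ∃ T : Finset (Fin n),
        T.card = 2 ∧ x ∉ core (vTgame n v Δ T)) ∧
    (⋂ w ∈ {w : Finset (Fin n) → ℝ | IsPositive w ∧ IsExtension v vN w}, core w)
      = (∅ : Set (Fin n → ℝ)) := by
  have part1 : ∀ x ∈ imputations n v vN, ∃ T : Finset (Fin n),
      T.card = 2 ∧ x ∉ core (vTgame n v Δ T) := by
    intro x hx
    obtain ⟨hsum, hge⟩ := hx
    set e : Fin n → ℝ := fun i => x i - v i with he
    have henn : ∀ m, 0 ≤ e m := fun m => sub_nonneg.mpr (hge m)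
    have hsume : ∑ i, e i = Δ := by
      simp only [he, Finset.sum_sub_distrib, hsum]; linarith
    have hn0 : 0 < n := by omega
    obtain ⟨i, _, hi⟩ := Finset.exists_min_image Finset.univ e
      ⟨⟨0, hn0⟩, Finset.mem_univ _⟩
    have h2 : (Finset.univ.erase i).Nonempty := by
      rw [← Finset.card_pos, Finset.card_erase_of_mem (Finset.mem_univ i),
        Finset.card_univ, Fintype.card_fin]
      omega
    obtain ⟨j, hjmem, hjmin⟩ := Finset.exists_min_image _ e h2
    have hji : j ≠ i := (Finset.mem_erase.1 hjmem).1
    have h3 : ((Finset.univ.erase i).erase j).Nonempty := by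
      rw [← Finset.card_pos, Finset.card_erase_of_mem hjmem,
        Finset.card_erase_of_mem (Finset.mem_univ i), Finset.card_univ, Fintype.card_fin]
      omega
    obtain ⟨k, hkmem⟩ := h3
    have hkj : k ≠ j := (Finset.mem_erase.1 hkmem).1
    have hki : k ≠ i := (Finset.mem_erase.1 (Finset.mem_erase.1 hkmem).2).1
    have heik : e i ≤ e k := hi k (Finset.mem_univ k)
    have hejk : e j ≤ e k := hjmin k (Finset.mem_erase.1 hkmem).2
    have hsum3 : e i + e j + e k ≤ Δ := by
      rw [← hsume]
      have hset : ∑ m ∈ ({i, j, k} : Finset (Fin n)), e m = e i + e j + e k := by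
        rw [Finset.sum_insert (by simp [Ne.symm hji, Ne.symm hki]),
          Finset.sum_insert (by simp [Ne.symm hkj]), Finset.sum_singleton, add_assoc]
      rw [← hset]
      exact Finset.sum_le_sum_of_subset_of_nonneg (Finset.subset_univ _)
        (fun m _ _ => henn m)
    have hkey : e i + e j < Δ := by
      by_contra h
      push_neg at h
      have := henn i; have := henn j
      linarith
    refine ⟨{i, j}, ?_, ?_⟩
    · rw [Finset.card_insert_of_notMem (by simp [Ne.symm hji]), Finset.card_singleton]
    · intro hcore
      have hc := hcore.2 {i, j}
      have hself : ({i, j} : Finset (Fin n)) ⊆ {i, j} := le_rfl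
      simp only [vTgame, if_pos hself] at hc
      have hxs : ∑ m ∈ ({i, j} : Finset (Fin n)), x m = x i + x j := by
        rw [Finset.sum_insert (by simp [Ne.symm hji]), Finset.sum_singleton]
      have hvs : ∑ m ∈ ({i, j} : Finset (Fin n)), v m = v i + v j := by
        rw [Finset.sum_insert (by simp [Ne.symm hji]), Finset.sum_singleton]
      rw [hxs, hvs] at hc
      have hei : e i = x i - v i := rfl
      have hej : e j = x j - v j := rfl
      rw [hei, hej] at hkey
      linarith
    
  refine ⟨part1, ?_⟩
  ext x
  simp only [Set.mem_iInter, Set.mem_empty_iff_false, iff_false, Set.mem_setOf_eq, not_forall]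
  by_contra hcon
  push_neg at hcon
  have hx : ∀ w : Finset (Fin n) → ℝ, IsPositive w → IsExtension v vN w → x ∈ core w := by
    intro w h1 h2; exact hcon w ⟨h1, h2⟩
  have hun : 2 ≤ (Finset.univ : Finset (Fin n)).card := by
    rw [Finset.card_univ, Fintype.card_fin]; omega
  obtain ⟨hupos, huext⟩ := mystmt18_vT_pos_ext n hn v hv vN Δ hΔdef hΔ Finset.univ hun
  obtain ⟨hc1, hc2⟩ := hx _ hupos huext
  have himp : x ∈ imputations n v vN := by
    refine ⟨?_, ?_⟩
    · rw [hc1, huext.2.2]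
    · intro i
      have h := hc2 {i}
      rw [huext.2.1 i, Finset.sum_singleton] at h
      exact h
  obtain ⟨T, hT2, hTnc⟩ := part1 x himp
  exact hTnc (hx _ ((mystmt18_vT_pos_ext n hn v hv vN Δ hΔdef hΔ T (by omega)).1)
    ((mystmt18_vT_pos_ext n hn v hv vN Δ hΔdef hΔ T (by omega)).2))
end
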